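/- arXiv:2012.14844 — 3 statements merged into one kernel-verified Lean document; each statement's English description precedes it below -/
import Mathlib

section
/- Let U, Û ∈ O_{p,r} and let U_⊥ ∈ O_{p,p−r} be an orthogonal complement of U. Then there exists an orthogonal matrix R ∈ O_r such that ‖ÛᵀU − R‖ ≤ ‖U_⊥ᵀÛ‖², where ‖·‖ is the spectral (operator) norm. -/
/-
With `A = Ûᵀ U` and `B = U_⊥ᵀ Û`, the completeness relation `U Uᵀ + U_⊥ U_⊥ᵀ = 1` and
`Ûᵀ Û = 1` give `1 - A Aᵀ = Bᵀ B`, hence `‖1 - A Aᵀ‖ = ‖B‖²`. For any square `M` with singular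
value decomposition `M = W Σ Vᵀ`, the orthogonal matrix `R = W Vᵀ` satisfies
`‖M - R‖ = maxᵢ |σᵢ - 1| ≤ maxᵢ |σᵢ² - 1| = ‖1 - Mᵀ M‖`. Apply this to `M = Aᵀ` and transpose.
-/

open Matrix

/-- Spectral (operator) norm of a real matrix. -/
noncomputable def spec {m n : ℕ} (A : Matrix (Fin m) (Fin n) ℝ) : ℝ :=
  sSup {c : ℝ | ∃ v : Fin n → ℝ, (∑ j, v j ^ 2) ≤ 1 ∧
    c = Real.sqrt (∑ i, (A.mulVec v i) ^ 2)}

open scoped Matrix.Norms.L2Operator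

theorem Real.abs_sqrt_sub_one_le (x : ℝ) : |√x - 1| ≤ |x - 1| := by
  rcases le_or_gt x 0 with hx | hx
  · rw [Real.sqrt_eq_zero'.mpr hx, abs_of_nonpos (by linarith : x - 1 ≤ 0)]
    norm_num
    linarith
  · have h : x - 1 = (√x - 1) * (√x + 1) := by
      linear_combination (Real.sq_sqrt hx.le).symm
    rw [h, abs_mul]
    refine le_mul_of_one_le_right (abs_nonneg _) ?_
    rw [abs_of_pos (by positivity)]
    linarith [Real.sqrt_nonneg x]

theorem spec_eq_l2_opNorm {m n : ℕ} (A : Matrix (Fin m) (Fin n) ℝ) : spec A = ‖A‖ := by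
  rw [l2_opNorm_def, ← ContinuousLinearMap.sSup_unitClosedBall_eq_norm, spec]
  congr 1
  ext c
  simp only [Set.mem_ofPred_eq, LinearEquiv.trans_apply, LinearMap.coe_toContinuousLinearMap',
    EuclideanSpace.norm_eq, ofLp_toLpLin, toLin'_apply, Real.norm_eq_abs, sq_abs, Set.mem_image,
    Metric.mem_closedBall, dist_zero_right, Real.sqrt_le_one]
  exact ⟨fun ⟨v, hv, hc⟩ => ⟨WithLp.toLp 2 v, hv, hc.symm⟩,
    fun ⟨x, hx, hc⟩ => ⟨x.ofLp, hx, hc.symm⟩⟩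

namespace Matrix

theorem l2_opNorm_transpose {m n : Type*} [Fintype m] [Fintype n] [DecidableEq m]
    [DecidableEq n] (A : Matrix m n ℝ) : ‖Aᵀ‖ = ‖A‖ := by
  simpa only [conjTranspose_eq_transpose_of_trivial] using l2_opNorm_conjTranspose A

variable {n : Type*} [Fintype n] [DecidableEq n]

theorem exists_mem_orthogonalGroup_eq_mul_diagonal_sqrt (N : Matrix n n ℝ) (d : n → ℝ)
    (h : Nᵀ * N = diagonal d) :
    ∃ W ∈ orthogonalGroup n ℝ, N = W * diagonal (fun i => √(d i)) := by
  let col (j : n) : EuclideanSpace ℝ n := WithLp.toLp 2 fun i => N i j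
  have inner_col (i j : n) : inner ℝ (col i) (col j) = if i = j then d i else 0 := by
    simpa [col, PiLp.inner_apply, Matrix.mul_apply, diagonal_apply, mul_comm] using
      congrFun (congrFun h i) j
  have hd (j : n) : 0 ≤ d j := by
    simpa only [inner_col, if_pos] using real_inner_self_nonneg (x := col j)
  -- Normalize the nonzero columns and extend them to an orthonormal basis; the zero columns
  -- are matched by `√0 = 0` whatever basis vectors they receive.
  let S : Set n := {j | d j ≠ 0}
  have hS : Orthonormal ℝ (S.domRestrict fun j => (√(d j))⁻¹ • col j) := by
    rw [orthonormal_iff_ite]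
    rintro ⟨i, hi⟩ ⟨j, hj⟩
    simp only [Set.domRestrict_apply, inner_smul_left, inner_smul_right, inner_col,
      Subtype.mk.injEq]
    split_ifs with hij
    · subst hij
      have : 0 < d i := (hd i).lt_of_ne' hi
      simp only [map_inv₀, Real.ringHom_apply]
      field_simp
      rw [Real.sq_sqrt this.le]
    · simp
  obtain ⟨b, hb⟩ := hS.exists_orthonormalBasis_extension_of_card_eq (by simp)
  refine ⟨_, (EuclideanSpace.basisFun n ℝ).toMatrix_orthonormalBasis_mem_unitary b, ?_⟩
  ext i j
  rw [mul_diagonal, Module.Basis.toMatrix_apply]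
  simp only [OrthonormalBasis.coe_toBasis_repr_apply, EuclideanSpace.basisFun_repr]
  by_cases hj : j ∈ S
  · rw [hb j hj]
    have : √(d j) ≠ 0 := Real.sqrt_ne_zero'.mpr ((hd j).lt_of_ne' hj)
    simp only [PiLp.smul_apply, smul_eq_mul, col]
    field_simp
  · have hdj : d j = 0 := by simpa [S] using hj
    have : col j = 0 := inner_self_eq_zero.mp (by rw [inner_col, if_pos rfl, hdj])
    simpa [hdj, col] using congrArg (· i) this

theorem exists_singular_value_decomposition (M : Matrix n n ℝ) :
    ∃ W ∈ orthogonalGroup n ℝ, ∃ V ∈ orthogonalGroup n ℝ, ∃ e : n → ℝ,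
      M = W * diagonal (fun i => √(e i)) * Vᵀ ∧ Mᵀ * M = V * diagonal e * Vᵀ := by
  have hH : (Mᵀ * M).IsHermitian := by
    simpa [conjTranspose_eq_transpose_of_trivial] using isHermitian_conjTranspose_mul_self M
  set V : Matrix n n ℝ := (hH.eigenvectorUnitary : Matrix n n ℝ)
  have hV : V ∈ orthogonalGroup n ℝ := hH.eigenvectorUnitary.2
  have hVVt : V * Vᵀ = 1 := (mem_orthogonalGroup_iff n ℝ).mp hV
  have hdiag : Vᵀ * (Mᵀ * M) * V = diagonal hH.eigenvalues := by
    simpa [star_eq_conjTranspose, conjTranspose_eq_transpose_of_trivial] using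
      hH.conjStarAlgAut_star_eigenvectorUnitary
  obtain ⟨W, hW, hMV⟩ := exists_mem_orthogonalGroup_eq_mul_diagonal_sqrt (M * V)
    hH.eigenvalues (by rw [← hdiag, transpose_mul]; simp only [Matrix.mul_assoc])
  refine ⟨W, hW, V, hV, hH.eigenvalues, ?_, ?_⟩
  · rw [← hMV, Matrix.mul_assoc, hVVt, Matrix.mul_one]
  · rw [← hdiag]
    simp only [← Matrix.mul_assoc, hVVt, Matrix.one_mul]
    simp only [Matrix.mul_assoc, hVVt, Matrix.mul_one]

theorem exists_mem_orthogonalGroup_norm_sub_le (M : Matrix n n ℝ) :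
    ∃ R ∈ orthogonalGroup n ℝ, ‖M - R‖ ≤ ‖1 - Mᵀ * M‖ := by
  obtain ⟨W, hW, V, hV, e, hM, hMtM⟩ := exists_singular_value_decomposition M
  have hVt : Vᵀ ∈ orthogonalGroup n ℝ := transpose_mem_unitaryGroup_iff.mpr hV
  refine ⟨W * Vᵀ, mul_mem hW hVt, ?_⟩
  have h1 : M - W * Vᵀ = W * diagonal (fun i => √(e i) - 1) * Vᵀ := by
    rw [hM, ← diagonal_sub, diagonal_one, Matrix.mul_sub, Matrix.sub_mul, Matrix.mul_one]
  have h2 : 1 - Mᵀ * M = V * diagonal (fun i => 1 - e i) * Vᵀ := by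
    rw [hMtM, ← diagonal_sub, diagonal_one, Matrix.mul_sub, Matrix.sub_mul, Matrix.mul_one,
      (mem_orthogonalGroup_iff n ℝ).mp hV]
  rw [h1, h2, CStarRing.norm_mul_coe_unitary _ ⟨Vᵀ, hVt⟩,
    CStarRing.norm_mul_coe_unitary _ ⟨Vᵀ, hVt⟩, CStarRing.norm_coe_unitary_mul ⟨W, hW⟩,
    CStarRing.norm_coe_unitary_mul ⟨V, hV⟩, l2_opNorm_diagonal, l2_opNorm_diagonal]
  refine (pi_norm_le_iff_of_nonneg (norm_nonneg _)).mpr fun i => ?_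
  calc ‖√(e i) - 1‖ ≤ ‖1 - e i‖ := by
        simpa only [Real.norm_eq_abs, abs_sub_comm (e i)] using Real.abs_sqrt_sub_one_le (e i)
    _ ≤ _ := norm_le_pi_norm (fun i => 1 - e i) i

end Matrix

theorem stmt2_general (p r : ℕ) (U Uhat : Matrix (Fin p) (Fin r) ℝ)
    (Uperp : Matrix (Fin p) (Fin (p - r)) ℝ)
    (hUhat : Uhatᵀ * Uhat = 1)
    (hcomplete : U * Uᵀ + Uperp * Uperpᵀ = 1) :
    ∃ R : Matrix (Fin r) (Fin r) ℝ, Rᵀ * R = 1 ∧ R * Rᵀ = 1 ∧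
      spec (Uhatᵀ * U - R) ≤ spec (Uperpᵀ * Uhat) ^ 2 := by
  set A := Uhatᵀ * U
  set B := Uperpᵀ * Uhat
  have hAB : 1 - A * Aᵀ = Bᵀ * B := by
    simp only [A, B, transpose_mul, transpose_transpose, Matrix.mul_assoc]
    rw [← Matrix.mul_assoc Uperp, eq_sub_of_add_eq' hcomplete, Matrix.sub_mul, Matrix.mul_sub,
      Matrix.one_mul, hUhat, Matrix.mul_assoc]
  obtain ⟨R, hR, hAR⟩ := exists_mem_orthogonalGroup_norm_sub_le Aᵀ
  refine ⟨Rᵀ, ?_, ?_, ?_⟩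
  · rw [transpose_transpose]; exact (mem_orthogonalGroup_iff _ ℝ).mp hR
  · rw [transpose_transpose]; exact (mem_orthogonalGroup_iff' _ ℝ).mp hR
  · rw [spec_eq_l2_opNorm, spec_eq_l2_opNorm]
    calc ‖A - Rᵀ‖ = ‖Aᵀ - R‖ := by rw [← l2_opNorm_transpose, transpose_sub, transpose_transpose]
      _ ≤ ‖1 - Aᵀᵀ * Aᵀ‖ := hAR
      _ = ‖B‖ ^ 2 := by
        rw [transpose_transpose, hAB, sq, ← l2_opNorm_conjTranspose_mul_self,
          conjTranspose_eq_transpose_of_trivial]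

/-- For `U, Û ∈ O_{p,r}` and `U_⊥` an orthogonal complement of `U`, there is an
orthogonal `R ∈ O_r` with `‖ÛᵀU − R‖ ≤ ‖U_⊥ᵀÛ‖²`. -/
theorem stmt2 (p r : ℕ) (U Uhat : Matrix (Fin p) (Fin r) ℝ)
    (Uperp : Matrix (Fin p) (Fin (p - r)) ℝ)
    (hU : Uᵀ * U = 1) (hUhat : Uhatᵀ * Uhat = 1)
    (hUperp : Uperpᵀ * Uperp = 1) (horth : Uᵀ * Uperp = 0)
    (hcomplete : U * Uᵀ + Uperp * Uperpᵀ = 1) :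
    ∃ R : Matrix (Fin r) (Fin r) ℝ, Rᵀ * R = 1 ∧ R * Rᵀ = 1 ∧
      spec (Uhatᵀ * U - R) ≤ spec (Uperpᵀ * Uhat) ^ 2 :=
  stmt2_general p r U Uhat Uperp hUhat hcomplete
end

section
/- Let T and T̂ be p₁×p₂ matrices and let Û ∈ O_{p₁,r} consist of the top-r left singular vectors of T̂, with Û_⊥ an orthogonal complement. If rank(T) ≤ r, then ‖Û_⊥ᵀ T‖ ≤ 2‖T̂ − T‖ (spectral norm version), and the same inequality holds with the Frobenius norm on both sides. -/
open Matrix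

/-- Frobenius norm of a real matrix. -/
noncomputable def frob {m n : ℕ} (A : Matrix (Fin m) (Fin n) ℝ) : ℝ :=
  Real.sqrt (∑ i, ∑ j, (A i j) ^ 2)

namespace Stmt11

lemma sum_sq_eq_dot {n : ℕ} (f : Fin n → ℝ) : ∑ i, f i ^ 2 = f ⬝ᵥ f := by
  simp [dotProduct, sq]

lemma cs' {ι : Type*} [Fintype ι] (u w : ι → ℝ) :
    ∑ i, u i * w i ≤ Real.sqrt (∑ i, u i ^ 2) * Real.sqrt (∑ i, w i ^ 2) := by
  have h := Finset.sum_mul_sq_le_sq_mul_sq Finset.univ u w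
  calc ∑ i, u i * w i ≤ |∑ i, u i * w i| := le_abs_self _
    _ = Real.sqrt ((∑ i, u i * w i) ^ 2) := by rw [Real.sqrt_sq_eq_abs]
    _ ≤ Real.sqrt ((∑ i, u i ^ 2) * (∑ i, w i ^ 2)) := Real.sqrt_le_sqrt h
    _ = _ := Real.sqrt_mul (by positivity) _

lemma sqrt_tri' {ι : Type*} [Fintype ι] (u w : ι → ℝ) :
    Real.sqrt (∑ i, (u i + w i) ^ 2) ≤
      Real.sqrt (∑ i, u i ^ 2) + Real.sqrt (∑ i, w i ^ 2) := by
  have h1 : ∑ i, (u i + w i) ^ 2 ≤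
      (Real.sqrt (∑ i, u i ^ 2) + Real.sqrt (∑ i, w i ^ 2)) ^ 2 := by
    have hu : Real.sqrt (∑ i, u i ^ 2) ^ 2 = ∑ i, u i ^ 2 := Real.sq_sqrt (by positivity)
    have hw : Real.sqrt (∑ i, w i ^ 2) ^ 2 = ∑ i, w i ^ 2 := Real.sq_sqrt (by positivity)
    have hcs := cs' u w
    have hexp : ∑ i, (u i + w i) ^ 2
        = (∑ i, u i ^ 2) + 2 * (∑ i, u i * w i) + ∑ i, w i ^ 2 := by
      simp only [add_sq]
      rw [Finset.sum_add_distrib, Finset.sum_add_distrib, Finset.mul_sum]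
      congr 1
      congr 1
      exact Finset.sum_congr rfl fun i _ => by ring
    nlinarith
  calc Real.sqrt (∑ i, (u i + w i) ^ 2) ≤
      Real.sqrt ((Real.sqrt (∑ i, u i ^ 2) + Real.sqrt (∑ i, w i ^ 2)) ^ 2) :=
        Real.sqrt_le_sqrt h1
    _ = _ := Real.sqrt_sq (by positivity)

lemma frob_nonneg {m n : ℕ} (A : Matrix (Fin m) (Fin n) ℝ) : 0 ≤ frob A :=
  Real.sqrt_nonneg _

lemma frob_eq_prod {m n : ℕ} (A : Matrix (Fin m) (Fin n) ℝ) :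
    frob A = Real.sqrt (∑ p : Fin m × Fin n, A p.1 p.2 ^ 2) := by
  rw [frob, Fintype.sum_prod_type]

lemma frob_add_le {m n : ℕ} (A B : Matrix (Fin m) (Fin n) ℝ) :
    frob (A + B) ≤ frob A + frob B := by
  rw [frob_eq_prod, frob_eq_prod, frob_eq_prod]
  calc Real.sqrt (∑ p : Fin m × Fin n, (A + B) p.1 p.2 ^ 2)
      = Real.sqrt (∑ p : Fin m × Fin n, (A p.1 p.2 + B p.1 p.2) ^ 2) := rfl
    _ ≤ _ := sqrt_tri' _ _

lemma frob_neg {m n : ℕ} (A : Matrix (Fin m) (Fin n) ℝ) : frob (-A) = frob A := by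
  unfold frob
  congr 1
  exact Finset.sum_congr rfl fun i _ => Finset.sum_congr rfl fun j _ => by
    simp [neg_sq]

lemma zero_mem_spec_set {m n : ℕ} (A : Matrix (Fin m) (Fin n) ℝ) :
    (0 : ℝ) ∈ {c : ℝ | ∃ v : Fin n → ℝ, (∑ j, v j ^ 2) ≤ 1 ∧
      c = Real.sqrt (∑ i, (A.mulVec v i) ^ 2)} :=
  ⟨0, by simp⟩

lemma spec_set_bdd {m n : ℕ} (A : Matrix (Fin m) (Fin n) ℝ) :
    BddAbove {c : ℝ | ∃ v : Fin n → ℝ, (∑ j, v j ^ 2) ≤ 1 ∧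
      c = Real.sqrt (∑ i, (A.mulVec v i) ^ 2)} := by
  refine ⟨Real.sqrt (∑ i, ∑ j, A i j ^ 2), ?_⟩
  rintro c ⟨v, hv, rfl⟩
  apply Real.sqrt_le_sqrt
  have key : ∀ i, (A.mulVec v i) ^ 2 ≤ ∑ j, A i j ^ 2 := by
    intro i
    have h := Finset.sum_mul_sq_le_sq_mul_sq Finset.univ (fun j => A i j) v
    have : (∑ j, A i j * v j) ^ 2 ≤ (∑ j, A i j ^ 2) * 1 :=
      h.trans (by have : (0:ℝ) ≤ ∑ j, A i j ^ 2 := by positivity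
                  exact mul_le_mul_of_nonneg_left hv this)
    simpa [Matrix.mulVec, dotProduct] using this
  exact Finset.sum_le_sum fun i _ => key i

lemma spec_nonneg {m n : ℕ} (A : Matrix (Fin m) (Fin n) ℝ) : 0 ≤ spec A :=
  le_csSup (spec_set_bdd A) (zero_mem_spec_set A)

lemma sqrt_le_spec {m n : ℕ} (A : Matrix (Fin m) (Fin n) ℝ) (v : Fin n → ℝ)
    (hv : (∑ j, v j ^ 2) ≤ 1) :
    Real.sqrt (∑ i, (A.mulVec v i) ^ 2) ≤ spec A :=
  le_csSup (spec_set_bdd A) ⟨v, hv, rfl⟩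

lemma spec_le {m n : ℕ} (A : Matrix (Fin m) (Fin n) ℝ) (c : ℝ) (hc : 0 ≤ c)
    (h : ∀ v : Fin n → ℝ, (∑ j, v j ^ 2) ≤ 1 → (∑ i, (A.mulVec v i) ^ 2) ≤ c ^ 2) :
    spec A ≤ c := by
  apply csSup_le ⟨0, zero_mem_spec_set A⟩
  rintro b ⟨v, hv, rfl⟩
  calc Real.sqrt (∑ i, (A.mulVec v i) ^ 2) ≤ Real.sqrt (c ^ 2) := Real.sqrt_le_sqrt (h v hv)
    _ = c := Real.sqrt_sq hc

lemma spec_bound {m n : ℕ} (A : Matrix (Fin m) (Fin n) ℝ) (v : Fin n → ℝ) :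
    (∑ i, (A.mulVec v i) ^ 2) ≤ spec A ^ 2 * ∑ j, v j ^ 2 := by
  by_cases h0 : (∑ j, v j ^ 2) = 0
  · have hv : v = 0 := by
      funext j
      have : v j ^ 2 ≤ 0 := h0 ▸ Finset.single_le_sum (f := fun j => v j ^ 2)
        (fun j _ => by positivity) (Finset.mem_univ j)
      have := le_antisymm this (by positivity)
      simpa [pow_eq_zero_iff] using this
    simp [hv, h0, Matrix.mulVec_zero]
  · have hpos : 0 < ∑ j, v j ^ 2 := lt_of_le_of_ne (by positivity) (Ne.symm h0)
    set s := Real.sqrt (∑ j, v j ^ 2) with hs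
    have hspos : 0 < s := Real.sqrt_pos.mpr hpos
    have hs2 : s ^ 2 = ∑ j, v j ^ 2 := Real.sq_sqrt hpos.le
    have hw : (∑ j, (s⁻¹ • v) j ^ 2) ≤ 1 := by
      have : (∑ j, (s⁻¹ • v) j ^ 2) = s⁻¹ ^ 2 * ∑ j, v j ^ 2 := by
        simp [Finset.mul_sum, mul_pow]
      rw [this, ← hs2]
      field_simp
      norm_num
    have h1 := sqrt_le_spec A (s⁻¹ • v) hw
    have hmv : A.mulVec (s⁻¹ • v) = s⁻¹ • A.mulVec v := by
      rw [Matrix.mulVec_smul]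
    have h2 : Real.sqrt (∑ i, (A.mulVec (s⁻¹ • v) i) ^ 2)
        = s⁻¹ * Real.sqrt (∑ i, (A.mulVec v i) ^ 2) := by
      rw [hmv]
      have : (∑ i, (s⁻¹ • A.mulVec v) i ^ 2) = s⁻¹ ^ 2 * ∑ i, (A.mulVec v i) ^ 2 := by
        simp [Finset.mul_sum, mul_pow]
      rw [this, Real.sqrt_mul (by positivity), Real.sqrt_sq (by positivity)]
    rw [h2] at h1
    have h3 : Real.sqrt (∑ i, (A.mulVec v i) ^ 2) ≤ spec A * s := by
      rw [inv_mul_le_iff₀ hspos] at h1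
      linarith [h1]
    calc (∑ i, (A.mulVec v i) ^ 2)
        = Real.sqrt (∑ i, (A.mulVec v i) ^ 2) ^ 2 := (Real.sq_sqrt (by positivity)).symm
      _ ≤ (spec A * s) ^ 2 := by
          apply pow_le_pow_left₀ (Real.sqrt_nonneg _) h3
      _ = spec A ^ 2 * ∑ j, v j ^ 2 := by rw [mul_pow, hs2]

lemma spec_le' {m n : ℕ} (A : Matrix (Fin m) (Fin n) ℝ) (c : ℝ) (hc : 0 ≤ c)
    (h : ∀ v : Fin n → ℝ, (∑ i, (A.mulVec v i) ^ 2) ≤ c ^ 2 * ∑ j, v j ^ 2) :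
    spec A ≤ c := by
  apply spec_le A c hc
  intro v hv
  calc (∑ i, (A.mulVec v i) ^ 2) ≤ c ^ 2 * ∑ j, v j ^ 2 := h v
    _ ≤ c ^ 2 * 1 := by apply mul_le_mul_of_nonneg_left hv (by positivity)
    _ = c ^ 2 := mul_one _

/-- contraction: if `Cᵀ * C = 1` then `‖Cᵀ x‖ ≤ ‖x‖`. -/
lemma contract {p k : ℕ} (C : Matrix (Fin p) (Fin k) ℝ) (hC : Cᵀ * C = 1)
    (x : Fin p → ℝ) : (∑ j, (Cᵀ.mulVec x j) ^ 2) ≤ ∑ i, x i ^ 2 := by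
  set y := Cᵀ.mulVec x with hy
  have h1 : x ⬝ᵥ C.mulVec y = y ⬝ᵥ y := by
    rw [Matrix.dotProduct_mulVec, ← Matrix.mulVec_transpose]
  have h2 : (C.mulVec y) ⬝ᵥ (C.mulVec y) = y ⬝ᵥ y := by
    rw [Matrix.dotProduct_mulVec, ← Matrix.mulVec_transpose, Matrix.mulVec_mulVec, hC,
      Matrix.one_mulVec]
  have h3 : (0:ℝ) ≤ ∑ i, (x i - C.mulVec y i) ^ 2 := by positivity
  have h4 : ∑ i, (x i - C.mulVec y i) ^ 2 = x ⬝ᵥ x - y ⬝ᵥ y := by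
    have : ∀ i, (x i - C.mulVec y i) ^ 2
        = x i * x i - 2 * (x i * C.mulVec y i) + C.mulVec y i * C.mulVec y i := by
      intro i; ring
    rw [Finset.sum_congr rfl fun i _ => this i]
    rw [Finset.sum_add_distrib, Finset.sum_sub_distrib, ← Finset.mul_sum]
    have hx : ∑ i, x i * x i = x ⬝ᵥ x := rfl
    have hc1 : ∑ i, x i * C.mulVec y i = x ⬝ᵥ C.mulVec y := rfl
    have hc2 : ∑ i, C.mulVec y i * C.mulVec y i = (C.mulVec y) ⬝ᵥ (C.mulVec y) := rfl
    rw [hx, hc1, hc2, h1, h2]; ring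
  rw [sum_sq_eq_dot, sum_sq_eq_dot]
  linarith [h3, h4]

lemma spec_contract_mul {p k m2 : ℕ} (C : Matrix (Fin p) (Fin k) ℝ) (hC : Cᵀ * C = 1)
    (M : Matrix (Fin p) (Fin m2) ℝ) : spec (Cᵀ * M) ≤ spec M := by
  apply spec_le' _ _ (spec_nonneg M)
  intro v
  have : (Cᵀ * M).mulVec v = Cᵀ.mulVec (M.mulVec v) := by
    rw [Matrix.mulVec_mulVec]
  rw [this]
  exact (contract C hC (M.mulVec v)).trans (spec_bound M v)

lemma spec_transpose_le {m n : ℕ} (A : Matrix (Fin m) (Fin n) ℝ) : spec A ≤ spec Aᵀ := by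
  apply spec_le' _ _ (spec_nonneg Aᵀ)
  intro v
  set w := A.mulVec v with hw
  have key : w ⬝ᵥ w ≤ spec Aᵀ * Real.sqrt (∑ j, v j ^ 2) * Real.sqrt (∑ i, w i ^ 2) := by
    have h1 : v ⬝ᵥ (Aᵀ.mulVec w) = w ⬝ᵥ w := by
      rw [Matrix.dotProduct_mulVec, Matrix.vecMul_transpose]
    have h2 : v ⬝ᵥ (Aᵀ.mulVec w) ≤ Real.sqrt (∑ j, v j ^ 2) *
        Real.sqrt (∑ j, (Aᵀ.mulVec w j) ^ 2) := cs' v (Aᵀ.mulVec w)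
    have h3 : Real.sqrt (∑ j, (Aᵀ.mulVec w j) ^ 2) ≤ spec Aᵀ * Real.sqrt (∑ i, w i ^ 2) := by
      have := spec_bound Aᵀ w
      calc Real.sqrt (∑ j, (Aᵀ.mulVec w j) ^ 2)
          ≤ Real.sqrt (spec Aᵀ ^ 2 * ∑ i, w i ^ 2) := Real.sqrt_le_sqrt this
        _ = spec Aᵀ * Real.sqrt (∑ i, w i ^ 2) := by
            rw [Real.sqrt_mul (by positivity), Real.sqrt_sq (spec_nonneg _)]
    calc w ⬝ᵥ w = v ⬝ᵥ (Aᵀ.mulVec w) := h1.symm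
      _ ≤ Real.sqrt (∑ j, v j ^ 2) * Real.sqrt (∑ j, (Aᵀ.mulVec w j) ^ 2) := h2
      _ ≤ Real.sqrt (∑ j, v j ^ 2) * (spec Aᵀ * Real.sqrt (∑ i, w i ^ 2)) := by
          apply mul_le_mul_of_nonneg_left h3 (Real.sqrt_nonneg _)
      _ = spec Aᵀ * Real.sqrt (∑ j, v j ^ 2) * Real.sqrt (∑ i, w i ^ 2) := by ring
  -- from ‖w‖² ≤ c * ‖w‖ deduce ‖w‖² ≤ c²  where c = spec Aᵀ * sqrt(Σv²)
  set c := spec Aᵀ * Real.sqrt (∑ j, v j ^ 2) with hc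
  have hcnn : 0 ≤ c := mul_nonneg (spec_nonneg _) (Real.sqrt_nonneg _)
  have hsq : Real.sqrt (∑ i, w i ^ 2) ^ 2 = ∑ i, w i ^ 2 := Real.sq_sqrt (by positivity)
  have h5 : Real.sqrt (∑ i, w i ^ 2) * Real.sqrt (∑ i, w i ^ 2)
      ≤ c * Real.sqrt (∑ i, w i ^ 2) := by
    have key2 : (∑ i, w i ^ 2) ≤ c * Real.sqrt (∑ i, w i ^ 2) := by
      conv_lhs => rw [sum_sq_eq_dot]
      exact key
    nlinarith [hsq, key2]
  have h6 : Real.sqrt (∑ i, w i ^ 2) ≤ c := by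
    rcases eq_or_lt_of_le (Real.sqrt_nonneg (∑ i, w i ^ 2)) with h | h
    · rw [← h]; exact hcnn
    · exact le_of_mul_le_mul_right h5 h
  calc ∑ i, (A.mulVec v i) ^ 2 = ∑ i, w i ^ 2 := rfl
    _ = Real.sqrt (∑ i, w i ^ 2) ^ 2 := hsq.symm
    _ ≤ c ^ 2 := pow_le_pow_left₀ (Real.sqrt_nonneg _) h6 2
    _ = spec Aᵀ ^ 2 * ∑ j, v j ^ 2 := by
        rw [hc, mul_pow, Real.sq_sqrt (by positivity)]

lemma spec_add_le {m n : ℕ} (A B : Matrix (Fin m) (Fin n) ℝ) :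
    spec (A + B) ≤ spec A + spec B := by
  apply spec_le _ _ (add_nonneg (spec_nonneg A) (spec_nonneg B))
  intro v hv
  have hmv : (A + B).mulVec v = fun i => A.mulVec v i + B.mulVec v i := by
    funext i
    rw [Matrix.add_mulVec]
    rfl
  have sqA : Real.sqrt (∑ i, (A.mulVec v i) ^ 2) ≤ spec A := sqrt_le_spec A v hv
  have sqB : Real.sqrt (∑ i, (B.mulVec v i) ^ 2) ≤ spec B := sqrt_le_spec B v hv
  have tri : Real.sqrt (∑ i, ((A + B).mulVec v i) ^ 2)
      ≤ Real.sqrt (∑ i, (A.mulVec v i) ^ 2) + Real.sqrt (∑ i, (B.mulVec v i) ^ 2) := by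
    rw [hmv]
    exact sqrt_tri' (A.mulVec v) (B.mulVec v)
  have h7 : Real.sqrt (∑ i, ((A + B).mulVec v i) ^ 2) ≤ spec A + spec B :=
    tri.trans (add_le_add sqA sqB)
  calc (∑ i, ((A + B).mulVec v i) ^ 2)
      = Real.sqrt (∑ i, ((A + B).mulVec v i) ^ 2) ^ 2 := (Real.sq_sqrt (by positivity)).symm
    _ ≤ (spec A + spec B) ^ 2 := pow_le_pow_left₀ (Real.sqrt_nonneg _) h7 2

lemma spec_neg {m n : ℕ} (A : Matrix (Fin m) (Fin n) ℝ) : spec (-A) = spec A := by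
  unfold spec
  congr 1
  ext c
  constructor <;> rintro ⟨v, hv, rfl⟩ <;> exact ⟨v, hv, by simp [Matrix.neg_mulVec]⟩
lemma contract_F2 {p k m2 : ℕ} (C : Matrix (Fin p) (Fin k) ℝ) (hC : Cᵀ * C = 1)
    (M : Matrix (Fin p) (Fin m2) ℝ) :
    (∑ j, ∑ l, ((Cᵀ * M) j l) ^ 2) ≤ ∑ i, ∑ l, (M i l) ^ 2 := by
  rw [Finset.sum_comm]
  rw [Finset.sum_comm (s := Finset.univ) (t := Finset.univ) (f := fun i l => (M i l) ^ 2)]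
  apply Finset.sum_le_sum
  intro l _
  have : ∀ j, (Cᵀ * M) j l = Cᵀ.mulVec (fun i => M i l) j := by
    intro j
    simp [Matrix.mul_apply, Matrix.mulVec, dotProduct]
  calc (∑ j, ((Cᵀ * M) j l) ^ 2) = ∑ j, (Cᵀ.mulVec (fun i => M i l) j) ^ 2 :=
        Finset.sum_congr rfl fun j _ => by rw [this j]
    _ ≤ ∑ i, (M i l) ^ 2 := contract C hC _

lemma frob_contract {p k m2 : ℕ} (C : Matrix (Fin p) (Fin k) ℝ) (hC : Cᵀ * C = 1)
    (M : Matrix (Fin p) (Fin m2) ℝ) : frob (Cᵀ * M) ≤ frob M :=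
  Real.sqrt_le_sqrt (contract_F2 C hC M)

lemma F2_eq_trace {a b : ℕ} (A : Matrix (Fin a) (Fin b) ℝ) :
    (∑ i, ∑ j, A i j ^ 2) = Matrix.trace (A * Aᵀ) := by
  simp [Matrix.trace, Matrix.diag, Matrix.mul_apply, sq]

lemma gram_dot {a b : ℕ} (N : Matrix (Fin a) (Fin b) ℝ) (x : Fin a → ℝ) :
    (∑ l, (Nᵀ.mulVec x l) ^ 2) = x ⬝ᵥ ((N * Nᵀ).mulVec x) := by
  have h1 : x ⬝ᵥ ((N * Nᵀ).mulVec x) = (Nᵀ.mulVec x) ⬝ᵥ (Nᵀ.mulVec x) := by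
    rw [← Matrix.mulVec_mulVec, Matrix.dotProduct_mulVec x N, ← Matrix.mulVec_transpose]
  rw [h1]
  simp [dotProduct, sq]

lemma quad_dot {a b : ℕ} (U : Matrix (Fin a) (Fin b) ℝ) (D : Fin b → ℝ) (q : Fin a → ℝ) :
    q ⬝ᵥ ((U * Matrix.diagonal D * Uᵀ).mulVec q) = ∑ i, D i * (Uᵀ.mulVec q i) ^ 2 := by
  have h1 : (U * Matrix.diagonal D * Uᵀ).mulVec q
      = U.mulVec ((Matrix.diagonal D).mulVec (Uᵀ.mulVec q)) := by
    rw [Matrix.mulVec_mulVec, Matrix.mulVec_mulVec]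
  rw [h1, Matrix.dotProduct_mulVec q U, ← Matrix.mulVec_transpose]
  set v := Uᵀ.mulVec q with hv
  have h2 : (Matrix.diagonal D).mulVec v = fun i => D i * v i := by
    funext i
    rw [Matrix.mulVec_diagonal]
  rw [h2]
  simp [dotProduct, sq]
  exact Finset.sum_congr rfl fun i _ => by ring

lemma trace_quad {a b k : ℕ} (U : Matrix (Fin a) (Fin b) ℝ) (D : Fin b → ℝ)
    (Q : Matrix (Fin a) (Fin k) ℝ) :
    Matrix.trace (Qᵀ * (U * Matrix.diagonal D * Uᵀ) * Q)
      = ∑ i, D i * ∑ c, ((Uᵀ * Q) i c) ^ 2 := by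
  have h1 : Qᵀ * (U * Matrix.diagonal D * Uᵀ) * Q
      = (Uᵀ * Q)ᵀ * (Matrix.diagonal D * (Uᵀ * Q)) := by
    simp only [Matrix.transpose_mul, Matrix.transpose_transpose, Matrix.mul_assoc]
  rw [h1]
  set A := Uᵀ * Q with hA
  set B := Matrix.diagonal D * A with hB
  have h2 : ∀ i c, B i c = D i * A i c := fun i c => Matrix.diagonal_mul _ _ _ _
  simp only [Matrix.trace, Matrix.diag, Matrix.mul_apply, Matrix.transpose_apply]
  rw [Finset.sum_comm]
  apply Finset.sum_congr rfl
  intro i _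
  rw [Finset.mul_sum]
  apply Finset.sum_congr rfl
  intro c _
  rw [h2 i c]
  ring
noncomputable def eE {n : ℕ} : (Fin n → ℝ) ≃ₗ[ℝ] EuclideanSpace ℝ (Fin n) :=
  (WithLp.linearEquiv 2 ℝ (Fin n → ℝ)).symm

lemma inner_eE {n : ℕ} (u v : Fin n → ℝ) :
    (inner ℝ (eE u) (eE v) : ℝ) = ∑ i, u i * v i := by
  simp [eE, PiLp.inner_apply, RCLike.inner_apply, WithLp.linearEquiv, mul_comm]

lemma eE_symm_apply {n : ℕ} (x : EuclideanSpace ℝ (Fin n)) (i : Fin n) :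
    eE.symm x i = x i := rfl

noncomputable def colSpan {p1 p2 : ℕ} (T : Matrix (Fin p1) (Fin p2) ℝ) :
    Submodule ℝ (EuclideanSpace ℝ (Fin p1)) :=
  Submodule.span ℝ (Set.range fun l => eE (Tᵀ l))

lemma finrank_colSpan {p1 p2 : ℕ} (T : Matrix (Fin p1) (Fin p2) ℝ) :
    Module.finrank ℝ (colSpan T) = T.rank := by
  rw [Matrix.rank_eq_finrank_span_cols]
  have hs : (Set.range fun l => eE (Tᵀ l)) =
      (eE (n := p1)).toLinearMap '' Set.range Tᵀ := by
    exact (Set.range_comp _ _)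
  have hmap : colSpan T =
      Submodule.map (eE (n := p1)).toLinearMap (Submodule.span ℝ (Set.range Tᵀ)) := by
    rw [colSpan, hs, Submodule.map_span]
  rw [hmap]
  exact LinearEquiv.finrank_map_eq _ _

lemma mem_orthogonal_colSpan {p1 p2 : ℕ} (T : Matrix (Fin p1) (Fin p2) ℝ)
    (x : EuclideanSpace ℝ (Fin p1)) (hx : x ∈ (colSpan T)ᗮ) :
    Tᵀ.mulVec (eE.symm x) = 0 := by
  funext l
  have h2 : (inner ℝ (eE (Tᵀ l)) x : ℝ) = 0 :=
    hx (eE (Tᵀ l)) (Submodule.subset_span ⟨l, rfl⟩)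
  rw [← (eE (n := p1)).apply_symm_apply x, inner_eE] at h2
  exact h2
lemma exists_Q (p1 p2 m' : ℕ) (T : Matrix (Fin p1) (Fin p2) ℝ) (h : T.rank + m' ≤ p1) :
    ∃ Q : Matrix (Fin p1) (Fin m') ℝ, Qᵀ * Q = 1 ∧ Qᵀ * T = 0 := by
  set V := colSpan T with hV
  have hdim : Module.finrank ℝ V + Module.finrank ℝ Vᗮ = p1 := by
    rw [Submodule.finrank_add_finrank_orthogonal, finrank_euclideanSpace_fin]
  have hm' : m' ≤ Module.finrank ℝ Vᗮ := by
    have hfr : Module.finrank ℝ ↥V = T.rank := finrank_colSpan T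
    omega
  set ob := stdOrthonormalBasis ℝ ↥Vᗮ with hob
  set qf : Fin m' → EuclideanSpace ℝ (Fin p1) :=
    fun j => ((ob (Fin.castLE hm' j) : ↥Vᗮ) : EuclideanSpace ℝ (Fin p1)) with hqf
  have hqforth : ∀ j k, (inner ℝ (qf j) (qf k) : ℝ) = if j = k then 1 else 0 := by
    intro j k
    have h1 : (inner ℝ (qf j) (qf k) : ℝ) = inner ℝ (ob (Fin.castLE hm' j)) (ob (Fin.castLE hm' k)) :=
      (Submodule.coe_inner _ _ _).symm
    rw [h1, orthonormal_iff_ite.mp ob.orthonormal]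
    by_cases hjk : j = k
    · simp [hjk]
    · simp [hjk, fun h => hjk (Fin.castLE_injective hm' h)]
  have hqfmem : ∀ j, qf j ∈ Vᗮ := fun j => (ob (Fin.castLE hm' j)).2
  refine ⟨Matrix.of fun i j => eE.symm (qf j) i, ?_, ?_⟩
  · ext j k
    have : (∑ i, eE.symm (qf j) i * eE.symm (qf k) i) = (inner ℝ (qf j) (qf k) : ℝ) := by
      rw [← inner_eE, (eE (n := p1)).apply_symm_apply, (eE (n := p1)).apply_symm_apply]
    simp only [Matrix.mul_apply, Matrix.transpose_apply, Matrix.of_apply]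
    rw [this, hqforth j k]
    by_cases hjk : j = k <;> simp [hjk, Matrix.one_apply]
  · ext j l
    have h0 := mem_orthogonal_colSpan T (qf j) (hqfmem j)
    have : (Tᵀ.mulVec (eE.symm (qf j))) l = 0 := by rw [h0]; rfl
    simp only [Matrix.mul_apply, Matrix.transpose_apply, Matrix.of_apply, Matrix.zero_apply]
    simpa [Matrix.mulVec, dotProduct, mul_comm] using this
lemma exists_q (p1 p2 r : ℕ) (T : Matrix (Fin p1) (Fin p2) ℝ) (hrank : T.rank ≤ r)
    (Uhat : Matrix (Fin p1) (Fin r) ℝ) (Uperp : Matrix (Fin p1) (Fin (p1 - r)) ℝ)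
    (hUhat : Uhatᵀ * Uhat = 1) (hUperp : Uperpᵀ * Uperp = 1) (horth : Uhatᵀ * Uperp = 0)
    (jstar : Fin (p1 - r)) :
    ∃ q : Fin p1 → ℝ, (∑ i, q i ^ 2) = 1 ∧ Tᵀ.mulVec q = 0 ∧
      ∀ j, j ≠ jstar → Uperpᵀ.mulVec q j = 0 := by
  classical
  -- the orthonormal family: columns of Uhat plus column jstar of Uperp
  set g : Fin r ⊕ Unit → EuclideanSpace ℝ (Fin p1) := fun a =>
    Sum.elim (fun i => eE (fun k => Uhat k i)) (fun _ => eE (fun k => Uperp k jstar)) a with hg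
  have hgorth : Orthonormal ℝ g := by
    rw [orthonormal_iff_ite]
    intro a b
    rcases a with i | _ <;> rcases b with i' | _
    · show (inner ℝ (eE (fun k => Uhat k i)) (eE (fun k => Uhat k i')) : ℝ) = _
      rw [inner_eE]
      have h5 : (∑ k, Uhat k i * Uhat k i') = (Uhatᵀ * Uhat) i i' := by
        simp [Matrix.mul_apply, Matrix.transpose_apply]
      rw [h5, hUhat]
      by_cases h : i = i' <;> simp [h, Matrix.one_apply]
    · show (inner ℝ (eE (fun k => Uhat k i)) (eE (fun k => Uperp k jstar)) : ℝ) = _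
      rw [inner_eE]
      have h5 : (∑ k, Uhat k i * Uperp k jstar) = (Uhatᵀ * Uperp) i jstar := by
        simp [Matrix.mul_apply, Matrix.transpose_apply]
      rw [h5, horth]
      simp
    · show (inner ℝ (eE (fun k => Uperp k jstar)) (eE (fun k => Uhat k i')) : ℝ) = _
      rw [inner_eE]
      have h5 : (∑ k, Uperp k jstar * Uhat k i') = (Uhatᵀ * Uperp) i' jstar := by
        simp [Matrix.mul_apply, Matrix.transpose_apply, mul_comm]
      rw [h5, horth]
      simp
    · show (inner ℝ (eE (fun k => Uperp k jstar)) (eE (fun k => Uperp k jstar)) : ℝ) = _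
      rw [inner_eE]
      have h5 : (∑ k, Uperp k jstar * Uperp k jstar) = (Uperpᵀ * Uperp) jstar jstar := by
        simp [Matrix.mul_apply, Matrix.transpose_apply]
      rw [h5, hUperp]
      simp [Matrix.one_apply]
  set W : Submodule ℝ (EuclideanSpace ℝ (Fin p1)) := Submodule.span ℝ (Set.range g) with hW
  have hWrank : Module.finrank ℝ W = r + 1 := by
    rw [hW, finrank_span_eq_card hgorth.linearIndependent]
    simp
  set V := colSpan T with hV
  have hVdim : Module.finrank ℝ V + Module.finrank ℝ Vᗮ = p1 := by
    rw [Submodule.finrank_add_finrank_orthogonal, finrank_euclideanSpace_fin]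
  have hVle : Module.finrank ℝ V ≤ r := by
    have hfr : Module.finrank ℝ ↥V = T.rank := finrank_colSpan T
    omega
  have hsup : Module.finrank ℝ ↥(W ⊔ Vᗮ) ≤ p1 := by
    have := Submodule.finrank_le (W ⊔ Vᗮ)
    rwa [finrank_euclideanSpace_fin] at this
  have hinf : 0 < Module.finrank ℝ ↥(W ⊓ Vᗮ) := by
    have h1 : Module.finrank ℝ ↥(W ⊔ Vᗮ) + Module.finrank ℝ ↥(W ⊓ Vᗮ)
        = Module.finrank ℝ ↥W + Module.finrank ℝ ↥Vᗮ :=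
      Submodule.finrank_sup_add_finrank_inf_eq W Vᗮ
    omega
  obtain ⟨x0, hx0ne⟩ := Module.finrank_pos_iff_exists_ne_zero.mp hinf
  obtain ⟨x0, hx0mem⟩ := x0
  have hx0ne' : x0 ≠ 0 := by
    intro h
    apply hx0ne
    exact Subtype.ext h
  have hx0W : x0 ∈ W := hx0mem.1
  have hx0V : x0 ∈ Vᗮ := hx0mem.2
  set q0 : EuclideanSpace ℝ (Fin p1) := (‖x0‖⁻¹ : ℝ) • x0 with hq0
  have hnorm : ‖x0‖ ≠ 0 := norm_ne_zero_iff.mpr hx0ne'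
  have hq0W : q0 ∈ W := W.smul_mem _ hx0W
  have hq0V : q0 ∈ Vᗮ := Vᗮ.smul_mem _ hx0V
  have hq0norm : ‖q0‖ = 1 := by
    rw [hq0, norm_smul, norm_inv, norm_norm, inv_mul_cancel₀ hnorm]
  refine ⟨eE.symm q0, ?_, ?_, ?_⟩
  · have : (∑ i, (eE.symm q0) i ^ 2) = (inner ℝ q0 q0 : ℝ) := by
      rw [← (eE (n := p1)).apply_symm_apply q0, inner_eE]
      simp [sq]
    rw [this, real_inner_self_eq_norm_sq, hq0norm]
    norm_num
  · exact mem_orthogonal_colSpan T q0 hq0V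
  · intro j hj
    -- the j-th column of Uperp is orthogonal to every vector in the family g
    have hperp : ∀ a, (inner ℝ (eE (fun k => Uperp k j)) (g a) : ℝ) = 0 := by
      intro a
      rcases a with i | _ <;> simp only [hg, Sum.elim_inl, Sum.elim_inr, inner_eE]
      · have : (∑ k, Uperp k j * Uhat k i) = (Uhatᵀ * Uperp) i j := by
          simp [Matrix.mul_apply, Matrix.transpose_apply, mul_comm]
        rw [this, horth]; simp
      · have : (∑ k, Uperp k j * Uperp k jstar) = (Uperpᵀ * Uperp) j jstar := by
          simp [Matrix.mul_apply, Matrix.transpose_apply]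
        rw [this, hUperp, Matrix.one_apply]
        simp [hj]
    have hq0perp : (inner ℝ (eE (fun k => Uperp k j)) q0 : ℝ) = 0 := by
      have hle : W ≤ (ℝ ∙ (eE (fun k => Uperp k j)))ᗮ := by
        rw [hW, Submodule.span_le]
        rintro x ⟨a, rfl⟩
        rw [SetLike.mem_coe, Submodule.mem_orthogonal_singleton_iff_inner_right]
        exact hperp a
      exact Submodule.mem_orthogonal_singleton_iff_inner_right.mp (hle hq0W)
    rw [← (eE (n := p1)).apply_symm_apply q0, inner_eE] at hq0perp
    show ∑ k, Uperpᵀ j k * eE.symm q0 k = 0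
    simpa [Matrix.transpose_apply] using hq0perp

end Stmt11

open Stmt11

/-- If `Û` consists of the top-`r` left singular vectors of `T̂` (i.e. the leading `r`
eigenvectors of `T̂T̂ᵀ`), `Û_⊥` is its orthogonal complement, and `rank(T) ≤ r`, then
`‖Û_⊥ᵀ T‖ ≤ 2‖T̂ − T‖` in both the spectral and the Frobenius norm. -/
theorem stmt11 (p1 p2 r : ℕ) (hr : r ≤ p1)
    (T That : Matrix (Fin p1) (Fin p2) ℝ)
    (hrank : T.rank ≤ r)
    (Uhat : Matrix (Fin p1) (Fin r) ℝ) (Uperp : Matrix (Fin p1) (Fin (p1 - r)) ℝ)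
    (hUhat : Uhatᵀ * Uhat = 1) (hUperp : Uperpᵀ * Uperp = 1)
    (horth : Uhatᵀ * Uperp = 0)
    (hcomplete : Uhat * Uhatᵀ + Uperp * Uperpᵀ = 1)
    (D : Fin r → ℝ) (D2 : Fin (p1 - r) → ℝ)
    (heig : That * Thatᵀ =
      Uhat * Matrix.diagonal D * Uhatᵀ + Uperp * Matrix.diagonal D2 * Uperpᵀ)
    (htop : ∀ i j, D2 j ≤ D i) :
    spec (Uperpᵀ * T) ≤ 2 * spec (That - T) ∧
    frob (Uperpᵀ * T) ≤ 2 * frob (That - T) := by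
  classical
  set Z := That - T with hZ
  -- splitting : Uperpᵀ T = Uperpᵀ That + (-(Uperpᵀ Z))
  have hsplit : Uperpᵀ * T = Uperpᵀ * That + -(Uperpᵀ * Z) := by
    rw [hZ, Matrix.mul_sub]
    abel
  -- D2 as the gram matrix of Uperpᵀ That
  have hD2 : (Uperpᵀ * That) * (Uperpᵀ * That)ᵀ = Matrix.diagonal D2 := by
    have h1 : (Uperpᵀ * That) * (Uperpᵀ * That)ᵀ = Uperpᵀ * ((That * Thatᵀ) * Uperp) := by
      rw [Matrix.transpose_mul, Matrix.transpose_transpose]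
      simp only [Matrix.mul_assoc]
    rw [h1, heig]
    simp only [Matrix.add_mul, Matrix.mul_add, Matrix.mul_assoc, horth, hUperp]
    simp only [Matrix.mul_zero, Matrix.mul_one, zero_add]
    rw [← Matrix.mul_assoc, hUperp, Matrix.one_mul]
  -- entries of D2 are sums of squares
  have hD2diag : ∀ j, D2 j = ∑ l, ((Uperpᵀ * That) j l) ^ 2 := by
    intro j
    have h1 : ((Uperpᵀ * That) * (Uperpᵀ * That)ᵀ) j j = D2 j := by
      rw [hD2, Matrix.diagonal_apply_eq]
    rw [← h1, Matrix.mul_apply]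
    exact Finset.sum_congr rfl fun l _ => by rw [Matrix.transpose_apply]; ring
  have hD2nonneg : ∀ j, 0 ≤ D2 j := fun j => by rw [hD2diag j]; positivity
  -- ===================== SPECTRAL PART =====================
  have hspec : spec (Uperpᵀ * T) ≤ 2 * spec Z := by
    have s1 : spec (Uperpᵀ * T) ≤ spec (Uperpᵀ * That) + spec (Uperpᵀ * Z) := by
      rw [hsplit]
      exact (spec_add_le _ _).trans (by rw [spec_neg])
    have s2 : spec (Uperpᵀ * Z) ≤ spec Z := spec_contract_mul Uperp hUperp Z
    have s3 : spec (Uperpᵀ * That) ≤ spec Z := by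
      by_cases hm0 : p1 - r = 0
      · haveI : IsEmpty (Fin (p1 - r)) := by rw [hm0]; infer_instance
        apply spec_le _ _ (spec_nonneg Z)
        intro v _
        rw [Finset.univ_eq_empty, Finset.sum_empty]
        positivity
      · haveI : Nonempty (Fin (p1 - r)) := ⟨⟨0, Nat.pos_of_ne_zero hm0⟩⟩
        obtain ⟨jstar, -, hjs⟩ :=
          Finset.exists_max_image (Finset.univ : Finset (Fin (p1 - r))) D2 Finset.univ_nonempty
        have ha1 : spec (Uperpᵀ * That) ≤ spec (Thatᵀ * Uperp) := by
          have h := spec_transpose_le (Uperpᵀ * That)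
          rwa [Matrix.transpose_mul, Matrix.transpose_transpose] at h
        have ha2 : spec (Thatᵀ * Uperp) ≤ Real.sqrt (D2 jstar) := by
          apply spec_le' _ _ (Real.sqrt_nonneg _)
          intro x
          have e2 : (∑ l, ((Thatᵀ * Uperp).mulVec x l) ^ 2)
              = x ⬝ᵥ (((Uperpᵀ * That) * (Uperpᵀ * That)ᵀ).mulVec x) := by
            rw [← gram_dot (Uperpᵀ * That) x]
            exact Finset.sum_congr rfl fun l _ => by
              rw [Matrix.transpose_mul, Matrix.transpose_transpose]
          rw [e2, hD2]
          have e3 : x ⬝ᵥ ((Matrix.diagonal D2).mulVec x) = ∑ j, D2 j * x j ^ 2 := by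
            have h : (Matrix.diagonal D2).mulVec x = fun j => D2 j * x j := by
              funext j; rw [Matrix.mulVec_diagonal]
            rw [h]
            simp only [dotProduct]
            exact Finset.sum_congr rfl fun j _ => by ring
          rw [e3, Real.sq_sqrt (hD2nonneg jstar), Finset.mul_sum]
          exact Finset.sum_le_sum fun j _ =>
            mul_le_mul_of_nonneg_right (hjs j (Finset.mem_univ j)) (sq_nonneg (x j))
        have hb4 : Real.sqrt (D2 jstar) ≤ spec Z := by
          obtain ⟨q, hq1, hq2, hq3⟩ :=
            exists_q p1 p2 r T hrank Uhat Uperp hUhat hUperp horth jstar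
          have hb1 : Zᵀ.mulVec q = Thatᵀ.mulVec q := by
            rw [hZ, Matrix.transpose_sub, Matrix.sub_mulVec, hq2, sub_zero]
          have hb2 : (∑ l, (Zᵀ.mulVec q l) ^ 2) = q ⬝ᵥ ((That * Thatᵀ).mulVec q) := by
            rw [← gram_dot That q]
            exact Finset.sum_congr rfl fun l _ => by rw [hb1]
          have hb3 : q ⬝ᵥ ((That * Thatᵀ).mulVec q)
              = (∑ i, D i * (Uhatᵀ.mulVec q i) ^ 2)
                + ∑ j, D2 j * (Uperpᵀ.mulVec q j) ^ 2 := by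
            rw [heig, Matrix.add_mulVec, dotProduct_add, quad_dot, quad_dot]
          have hnorm : (∑ i, (Uhatᵀ.mulVec q i) ^ 2)
              + (∑ j, (Uperpᵀ.mulVec q j) ^ 2) = 1 := by
            rw [gram_dot Uhat q, gram_dot Uperp q, ← dotProduct_add, ← Matrix.add_mulVec,
              hcomplete, Matrix.one_mulVec, ← sum_sq_eq_dot, hq1]
          have hsum2 : (∑ j, D2 j * (Uperpᵀ.mulVec q j) ^ 2)
              = D2 jstar * (Uperpᵀ.mulVec q jstar) ^ 2 :=
            Finset.sum_eq_single jstar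
              (fun j _ hj => by rw [hq3 j hj]; ring)
              (fun h => absurd (Finset.mem_univ _) h)
          have hsum2' : (∑ j, (Uperpᵀ.mulVec q j) ^ 2) = (Uperpᵀ.mulVec q jstar) ^ 2 :=
            Finset.sum_eq_single jstar
              (fun j _ hj => by rw [hq3 j hj]; ring)
              (fun h => absurd (Finset.mem_univ _) h)
          have hge : D2 jstar ≤ ∑ l, (Zᵀ.mulVec q l) ^ 2 := by
            rw [hb2, hb3, hsum2]
            have h5 : D2 jstar * (∑ i, (Uhatᵀ.mulVec q i) ^ 2)
                + D2 jstar * (Uperpᵀ.mulVec q jstar) ^ 2 = D2 jstar := by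
              have h9 := hnorm
              rw [hsum2'] at h9
              rw [← mul_add, h9, mul_one]
            have h6 : (∑ i, D2 jstar * (Uhatᵀ.mulVec q i) ^ 2)
                ≤ ∑ i, D i * (Uhatᵀ.mulVec q i) ^ 2 :=
              Finset.sum_le_sum fun i _ =>
                mul_le_mul_of_nonneg_right (htop i jstar) (sq_nonneg _)
            rw [← Finset.mul_sum] at h6
            linarith
          have h7 : Real.sqrt (∑ l, (Zᵀ.mulVec q l) ^ 2) ≤ spec Zᵀ :=
            sqrt_le_spec Zᵀ q (le_of_eq hq1)
          have h8 : spec Zᵀ ≤ spec Z := by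
            have h := spec_transpose_le Zᵀ
            rwa [Matrix.transpose_transpose] at h
          exact (Real.sqrt_le_sqrt hge).trans (h7.trans h8)
        exact ha1.trans (ha2.trans hb4)
    linarith
  -- ===================== FROBENIUS PART =====================
  have hfrob : frob (Uperpᵀ * T) ≤ 2 * frob Z := by
    have f1 : frob (Uperpᵀ * T) ≤ frob (Uperpᵀ * That) + frob (Uperpᵀ * Z) := by
      rw [hsplit]
      exact (frob_add_le _ _).trans (by rw [frob_neg])
    have f2 : frob (Uperpᵀ * Z) ≤ frob Z := frob_contract Uperp hUperp Z
    have f3 : frob (Uperpᵀ * That) ≤ frob Z := by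
      unfold frob
      apply Real.sqrt_le_sqrt
      have g1 : (∑ j, ∑ l, ((Uperpᵀ * That) j l) ^ 2) = ∑ j, D2 j :=
        Finset.sum_congr rfl fun j _ => (hD2diag j).symm
      rw [g1]
      by_cases hm0 : p1 - r = 0
      · haveI : IsEmpty (Fin (p1 - r)) := by rw [hm0]; infer_instance
        rw [Finset.univ_eq_empty, Finset.sum_empty]
        positivity
      · haveI : Nonempty (Fin (p1 - r)) := ⟨⟨0, Nat.pos_of_ne_zero hm0⟩⟩
        obtain ⟨jstar, -, hjs⟩ :=
          Finset.exists_max_image (Finset.univ : Finset (Fin (p1 - r))) D2 Finset.univ_nonempty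
        obtain ⟨Q, hQ1, hQ2⟩ := exists_Q p1 p2 (p1 - r) T (by omega)
        have k1 : (∑ j, ∑ l, ((Qᵀ * That) j l) ^ 2)
            = (∑ i, D i * ∑ c, ((Uhatᵀ * Q) i c) ^ 2)
              + (∑ j, D2 j * ∑ c, ((Uperpᵀ * Q) j c) ^ 2) := by
          rw [F2_eq_trace, Matrix.transpose_mul, Matrix.transpose_transpose]
          rw [show Qᵀ * That * (Thatᵀ * Q) = Qᵀ * (That * Thatᵀ) * Q by
            simp only [Matrix.mul_assoc]]
          rw [heig, Matrix.mul_add, Matrix.add_mul, Matrix.trace_add, trace_quad, trace_quad]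
        have k2 : (∑ i, ∑ c, ((Uhatᵀ * Q) i c) ^ 2)
            + (∑ j, ∑ c, ((Uperpᵀ * Q) j c) ^ 2) = ((p1 - r : ℕ) : ℝ) := by
          have t1 := trace_quad Uhat (fun _ => (1:ℝ)) Q
          have t2 := trace_quad Uperp (fun _ => (1:ℝ)) Q
          rw [Matrix.diagonal_one] at t1 t2
          simp only [one_mul, Matrix.mul_one] at t1 t2
          rw [← t1, ← t2, ← Matrix.trace_add]
          rw [show Qᵀ * (Uhat * Uhatᵀ) * Q + Qᵀ * (Uperp * Uperpᵀ) * Q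
              = Qᵀ * (Uhat * Uhatᵀ + Uperp * Uperpᵀ) * Q by
            rw [Matrix.mul_add, Matrix.add_mul]]
          rw [hcomplete, Matrix.mul_one, hQ1, Matrix.trace_one]
          simp
        have k3 : ∀ j, (∑ c, ((Uperpᵀ * Q) j c) ^ 2) ≤ 1 := by
          intro j
          have e : ∀ c, (Uperpᵀ * Q) j c = Qᵀ.mulVec (fun i => Uperp i j) c := by
            intro c
            simp only [Matrix.mul_apply, Matrix.mulVec, dotProduct, Matrix.transpose_apply]
            exact Finset.sum_congr rfl fun i _ => by ring
          have e2 : (Uperpᵀ * Uperp) j j = 1 := by rw [hUperp]; simp [Matrix.one_apply]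
          calc (∑ c, ((Uperpᵀ * Q) j c) ^ 2)
              = ∑ c, (Qᵀ.mulVec (fun i => Uperp i j) c) ^ 2 :=
                Finset.sum_congr rfl fun c _ => by rw [e c]
            _ ≤ ∑ i, (Uperp i j) ^ 2 := contract Q hQ1 _
            _ = 1 := by
                rw [← e2, Matrix.mul_apply]
                exact Finset.sum_congr rfl fun i _ => by
                  rw [Matrix.transpose_apply]; ring
        have k4 : Qᵀ * Z = Qᵀ * That := by rw [hZ, Matrix.mul_sub, hQ2, sub_zero]
        have k5 : (∑ j, ∑ l, ((Qᵀ * That) j l) ^ 2) ≤ ∑ i, ∑ l, (Z i l) ^ 2 := by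
          rw [← k4]
          exact contract_F2 Q hQ1 Z
        -- it remains: ∑ D2 ≤ ∑ D α + ∑ D2 β given ∑α + ∑β = m, β ≤ 1, D2 j ≤ D2 jstar ≤ D i
        have key : (∑ j, D2 j) ≤ (∑ i, D i * ∑ c, ((Uhatᵀ * Q) i c) ^ 2)
            + (∑ j, D2 j * ∑ c, ((Uperpᵀ * Q) j c) ^ 2) := by
          set α : Fin r → ℝ := fun i => ∑ c, ((Uhatᵀ * Q) i c) ^ 2 with hα
          set β : Fin (p1 - r) → ℝ := fun j => ∑ c, ((Uperpᵀ * Q) j c) ^ 2 with hβ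
          have hαnn : ∀ i, 0 ≤ α i := fun i => by rw [hα]; positivity
          have i1 : (∑ j, D2 j * (1 - β j)) ≤ ∑ j, D2 jstar * (1 - β j) :=
            Finset.sum_le_sum fun j _ =>
              mul_le_mul_of_nonneg_right (hjs j (Finset.mem_univ j)) (by linarith [k3 j])
          have i2 : (∑ i, D2 jstar * α i) ≤ ∑ i, D i * α i :=
            Finset.sum_le_sum fun i _ =>
              mul_le_mul_of_nonneg_right (htop i jstar) (hαnn i)
          have e4 : (∑ j, D2 jstar * (1 - β j)) = D2 jstar * ((p1 - r : ℕ) - ∑ j, β j) := by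
            rw [← Finset.mul_sum]
            congr 1
            rw [Finset.sum_sub_distrib]
            simp
          have e5 : (∑ i, D2 jstar * α i) = D2 jstar * ∑ i, α i := by
            rw [← Finset.mul_sum]
          have e6 : (∑ j, D2 j * (1 - β j)) = (∑ j, D2 j) - ∑ j, D2 j * β j := by
            rw [← Finset.sum_sub_distrib]
            exact Finset.sum_congr rfl fun j _ => by ring
          have e7 : ((p1 - r : ℕ) : ℝ) - (∑ j, β j) = ∑ i, α i := by linarith [k2]
          rw [e6] at i1
          rw [e4, e7, ← e5] at i1
          linarith
        exact key.trans (k1 ▸ k5)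
    linarith
  exact ⟨hspec, hfrob⟩
end

section
/- For the class X_{p,r} = {A ∈ R^{p₁×p₂×p₃} : rank(M_i(A)) ≤ r_i for i = 1,2,3, ‖A‖_F ≤ 1} of unit-Frobenius-norm tensors of multilinear rank at most (r₁,r₂,r₃), and any ε ∈ (0,1), there exists an ε-net of X_{p,r} in Frobenius norm of cardinality at most ((8+ε)/ε)^{r₁r₂r₃ + p₁r₁ + p₂r₂ + p₃r₃}. -/
open Matrix

/-- Frobenius norm of an order-3 tensor. -/
noncomputable def tfrob {p1 p2 p3 : ℕ} (A : Fin p1 → Fin p2 → Fin p3 → ℝ) : ℝ :=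
  Real.sqrt (∑ i, ∑ j, ∑ k, (A i j k) ^ 2)

open MeasureTheory Metric ENNReal in
lemma net_of_ball (E : Type*) [NormedAddCommGroup E] [NormedSpace ℝ E]
    [FiniteDimensional ℝ E] {δ : ℝ} (hδ : 0 < δ) :
    ∃ S : Finset E, ((S.card : ℝ) ≤ ((2 + δ) / δ) ^ (Module.finrank ℝ E)) ∧
      (∀ x ∈ S, ‖x‖ ≤ 1) ∧ ∀ x : E, ‖x‖ ≤ 1 → ∃ y ∈ S, ‖x - y‖ ≤ δ := by
  classical
  set n := Module.finrank ℝ E with hn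
  borelize E
  set μ : Measure E := (Module.finBasis ℝ E).addHaar with hμ
  have hb : ((2 + δ) / δ : ℝ) = (1 + δ/2) / (δ/2) := by
    field_simp
  set P : Finset E → Prop :=
    fun S => (∀ x ∈ S, ‖x‖ ≤ 1) ∧ (S : Set E).Pairwise fun x y => δ ≤ ‖x - y‖ with hP
  -- card bound for any packing
  have cardb : ∀ S : Finset E, P S → (S.card : ℝ) ≤ ((2 + δ) / δ) ^ n := by
    intro S hS
    have hdisj : (S : Set E).PairwiseDisjoint (fun x => ball x (δ/2)) := by
      intro x hx y hy hxy
      refine ball_disjoint_ball ?_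
      rw [dist_eq_norm]
      linarith [hS.2 hx hy hxy]
    have hmeas : μ (⋃ x ∈ S, ball x (δ/2)) = ∑ x ∈ S, μ (ball x (δ/2)) :=
      measure_biUnion_finset hdisj (fun _ _ => measurableSet_ball)
    have hsum : ∑ x ∈ S, μ (ball x (δ/2)) = S.card * μ (ball 0 (δ/2)) := by
      rw [Finset.sum_congr rfl (fun x _ => Measure.addHaar_ball_center μ x (δ/2))]
      simp [Finset.sum_const, nsmul_eq_mul]
    have hsub : (⋃ x ∈ S, ball x (δ/2)) ⊆ ball 0 (1 + δ/2) := by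
      intro y hy
      simp only [Set.mem_iUnion] at hy
      obtain ⟨x, hx, hyx⟩ := hy
      rw [mem_ball, dist_eq_norm] at hyx ⊢
      have h1 : ‖x‖ ≤ 1 := hS.1 x hx
      calc ‖y - 0‖ = ‖(y - x) + x‖ := by rw [sub_zero]; congr 1; abel
        _ ≤ ‖y - x‖ + ‖x‖ := norm_add_le _ _
        _ < 1 + δ/2 := by linarith [hyx]
    have key : (S.card : ℝ≥0∞) * μ (ball 0 (δ/2)) ≤ μ (ball 0 (1 + δ/2)) := by
      rw [← hsum, ← hmeas]; exact measure_mono hsub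
    have h2 : 0 < δ/2 := by linarith
    rw [Measure.addHaar_ball_of_pos μ 0 h2, Measure.addHaar_ball_of_pos μ 0 (by linarith : (0:ℝ) < 1 + δ/2)] at key
    have hK0 : μ (ball (0:E) 1) ≠ 0 := (measure_ball_pos μ 0 one_pos).ne'
    have hKt : μ (ball (0:E) 1) ≠ ⊤ := measure_ball_lt_top.ne
    rw [← mul_assoc, ENNReal.mul_le_mul_iff_left hK0 hKt] at key
    have key2 : (S.card : ℝ) * (δ/2)^n ≤ (1 + δ/2)^n := by
      have := ENNReal.toReal_mono (by simp) key
      rw [ENNReal.toReal_mul, ENNReal.toReal_ofReal (by positivity), ENNReal.toReal_ofReal (by positivity)] at this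
      simpa using this
    rw [hb, div_pow]
    have hpos : (0:ℝ) < (δ/2)^n := by positivity
    rw [le_div_iff₀ hpos]
    exact key2
  let K := ⌊((2 + δ) / δ) ^ n⌋₊
  have hcardK : ∀ S : Finset E, P S → S.card ≤ K := fun S hS => Nat.le_floor (cardb S hS)
  set Q : ℕ → Prop := fun k => ∃ S : Finset E, P S ∧ S.card = k with hQ
  have hQ0 : Q 0 := ⟨∅, ⟨fun x hx => absurd hx (Finset.notMem_empty x), by simp⟩, rfl⟩
  have hQm : Q (Nat.findGreatest Q K) := Nat.findGreatest_spec (Nat.zero_le K) hQ0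
  obtain ⟨S, hPS, hScard⟩ := hQm
  refine ⟨S, cardb S hPS, hPS.1, ?_⟩
  intro x hx
  by_contra hcon
  push_neg at hcon
  have hxS : x ∉ S := by
    intro hmem
    have := hcon x hmem
    simp only [sub_self, norm_zero] at this
    linarith
  have hins : P (insert x S) := by
    constructor
    · intro y hy
      rcases Finset.mem_insert.1 hy with rfl | hy
      · exact hx
      · exact hPS.1 y hy
    · rw [Finset.coe_insert,
        Set.pairwise_insert]
      exact ⟨hPS.2, fun b hb hne => ⟨le_of_lt (hcon b hb), by
        rw [norm_sub_rev]; exact le_of_lt (hcon b hb)⟩⟩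
  have h1 : S.card + 1 ≤ Nat.findGreatest Q K :=
    Nat.le_findGreatest (by simpa [Finset.card_insert_of_notMem hxS] using hcardK _ hins)
      ⟨insert x S, hins, Finset.card_insert_of_notMem hxS⟩
  omega

noncomputable section
open ContinuousLinearMap

abbrev Euc (n : ℕ) := EuclideanSpace ℝ (Fin n)

def extL {d r : ℕ} (h : d ≤ r) : Euc d →ₗ[ℝ] Euc r where
  toFun x := WithLp.toLp 2 (fun a : Fin r => if h2 : (a : ℕ) < d then x ⟨a, h2⟩ else 0)
  map_add' x y := by
    ext a
    by_cases h2 : (a:ℕ) < d <;> simp [h2, PiLp.add_apply]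
  map_smul' c x := by
    ext a
    by_cases h2 : (a:ℕ) < d <;> simp [h2, PiLp.smul_apply]

def extCLM {d r : ℕ} (h : d ≤ r) : Euc d →L[ℝ] Euc r :=
  LinearMap.toContinuousLinearMap (extL h)

lemma extCLM_apply {d r : ℕ} (h : d ≤ r) (x : Euc d) (a : Fin r) :
    extCLM h x a = if h2 : (a : ℕ) < d then x ⟨a, h2⟩ else 0 := rfl

lemma extCLM_norm {d r : ℕ} (h : d ≤ r) (x : Euc d) : ‖extCLM h x‖ = ‖x‖ := by
  rw [EuclideanSpace.norm_eq, EuclideanSpace.norm_eq]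
  congr 1
  set g : ℕ → ℝ := fun i => if h2 : i < d then ‖x ⟨i, h2⟩‖ ^ 2 else 0 with hg
  have h1 : ∀ a : Fin r, ‖extCLM h x a‖ ^ 2 = g (a : ℕ) := by
    intro a
    rw [extCLM_apply]
    by_cases h2 : (a:ℕ) < d <;> simp [hg, h2]
  rw [Finset.sum_congr rfl (fun a _ => h1 a), Fin.sum_univ_eq_sum_range g r,
    ← Finset.sum_subset (Finset.range_subset_range.2 h)
      (fun i _ hi => by simp [hg, (by simpa using hi : ¬ i < d)]),
    ← Fin.sum_univ_eq_sum_range g d]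
  exact Finset.sum_congr rfl fun b _ => by simp [hg, b.isLt]

lemma extCLM_norm_le {d r : ℕ} (h : d ≤ r) : ‖extCLM h‖ ≤ 1 :=
  opNorm_le_bound _ zero_le_one fun x => by rw [extCLM_norm, one_mul]

def restrL {d r : ℕ} (h : d ≤ r) : Euc r →ₗ[ℝ] Euc d where
  toFun y := WithLp.toLp 2 (fun b => y (Fin.castLE h b))
  map_add' x y := by ext b; simp [PiLp.add_apply]
  map_smul' c x := by ext b; simp [PiLp.smul_apply]

def restrCLM {d r : ℕ} (h : d ≤ r) : Euc r →L[ℝ] Euc d :=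
  LinearMap.toContinuousLinearMap (restrL h)

lemma restrCLM_apply {d r : ℕ} (h : d ≤ r) (y : Euc r) (b : Fin d) :
    restrCLM h y b = y (Fin.castLE h b) := rfl

lemma restrCLM_norm_le {d r : ℕ} (h : d ≤ r) : ‖restrCLM h‖ ≤ 1 := by
  refine opNorm_le_bound _ zero_le_one fun y => ?_
  rw [one_mul, EuclideanSpace.norm_eq, EuclideanSpace.norm_eq]
  apply Real.sqrt_le_sqrt
  have key := Finset.sum_le_sum_of_subset_of_nonneg
    (Finset.subset_univ (Finset.univ.map ⟨Fin.castLE h, Fin.castLE_injective h⟩))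
    (fun (a : Fin r) _ _ => sq_nonneg ‖y a‖)
  rw [Finset.sum_map] at key
  simpa [restrCLM_apply] using key

lemma restr_ext {d r : ℕ} (h : d ≤ r) (x : Euc d) : restrCLM h (extCLM h x) = x := by
  ext b
  rw [restrCLM_apply, extCLM_apply, dif_pos (by simpa using b.isLt)]
  rfl

lemma euc_decomp {r : ℕ} (x : Euc r) : x = ∑ a, x a • EuclideanSpace.single a (1:ℝ) := by
  ext i
  rw [WithLp.ofLp_sum, Finset.sum_apply]
  simp [EuclideanSpace.single_apply]

lemma clm_apply_eq {r p : ℕ} (φ : Euc r →L[ℝ] Euc p) (x : Euc r) (i : Fin p) :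
    φ x i = ∑ a, x a * φ (EuclideanSpace.single a 1) i := by
  conv_lhs => rw [euc_decomp x]
  rw [map_sum, WithLp.ofLp_sum, Finset.sum_apply]
  exact Finset.sum_congr rfl fun a _ => by rw [_root_.map_smul]; rfl

lemma sum_sq_apply_le {r p : ℕ} (φ : Euc r →L[ℝ] Euc p) (x : Euc r) :
    ∑ i, (φ x i) ^ 2 ≤ ‖φ‖ ^ 2 * ∑ a, (x a) ^ 2 := by
  have h1 : ∀ (m : ℕ) (y : Euc m), ∑ i, (y i) ^ 2 = ‖y‖ ^ 2 := by
    intro m y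
    rw [EuclideanSpace.norm_eq, Real.sq_sqrt (by positivity)]
    exact Finset.sum_congr rfl fun i _ => by rw [Real.norm_eq_abs, sq_abs]
  rw [h1 _ (φ x), h1 _ x]
  calc ‖φ x‖ ^ 2 ≤ (‖φ‖ * ‖x‖) ^ 2 :=
        pow_le_pow_left₀ (norm_nonneg _) (φ.le_opNorm x) 2
    _ = ‖φ‖ ^ 2 * ‖x‖ ^ 2 := by ring

end

set_option synthInstance.maxHeartbeats 1000000 in
open ContinuousLinearMap in
lemma exists_iso {p r : ℕ} (W : Submodule ℝ (Euc p)) (hW : Module.finrank ℝ W ≤ r) :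
    ∃ (φ : Euc r →L[ℝ] Euc p) (ψ : Euc p →L[ℝ] Euc r),
      ‖φ‖ ≤ 1 ∧ ‖ψ‖ ≤ 1 ∧ ∀ v ∈ W, φ (ψ v) = v := by
  let b := stdOrthonormalBasis ℝ W
  let i1 : W →L[ℝ] Euc (Module.finrank ℝ W) := b.repr.toLinearIsometry.toContinuousLinearMap
  let i2 : Euc (Module.finrank ℝ W) →L[ℝ] W := b.repr.symm.toLinearIsometry.toContinuousLinearMap
  let ψ : Euc p →L[ℝ] Euc r := (extCLM hW) ∘L (i1 ∘L (W.orthogonalProjectionOnto))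
  let φ : Euc r →L[ℝ] Euc p := (W.subtypeL) ∘L (i2 ∘L (restrCLM hW))
  have hφ : ‖φ‖ ≤ 1 := by
    have h1 := opNorm_comp_le W.subtypeL (i2 ∘L restrCLM hW)
    have h2 := opNorm_comp_le i2 (restrCLM hW)
    have b1 := Submodule.norm_subtypeL_le W
    have b2 := b.repr.symm.toLinearIsometry.norm_toContinuousLinearMap_le
    have b3 := restrCLM_norm_le hW
    have n1 : (0:ℝ) ≤ ‖i2 ∘L restrCLM hW‖ := opNorm_nonneg _
    have n2 : (0:ℝ) ≤ ‖restrCLM hW‖ := opNorm_nonneg _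
    have n3 : (0:ℝ) ≤ ‖W.subtypeL‖ := opNorm_nonneg _
    have n4 : (0:ℝ) ≤ ‖i2‖ := opNorm_nonneg _
    nlinarith
  have hψ : ‖ψ‖ ≤ 1 := by
    have h1 := opNorm_comp_le (extCLM hW) (i1 ∘L (W.orthogonalProjectionOnto))
    have h2 := opNorm_comp_le i1 (W.orthogonalProjectionOnto : Euc p →L[ℝ] W)
    have b1 := extCLM_norm_le hW
    have b2 := b.repr.toLinearIsometry.norm_toContinuousLinearMap_le
    have b3 := Submodule.orthogonalProjectionOnto_norm_le W
    have n1 : (0:ℝ) ≤ ‖i1 ∘L (W.orthogonalProjectionOnto : Euc p →L[ℝ] W)‖ := opNorm_nonneg _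
    have n2 : (0:ℝ) ≤ ‖(W.orthogonalProjectionOnto : Euc p →L[ℝ] W)‖ := opNorm_nonneg _
    have n3 : (0:ℝ) ≤ ‖extCLM hW‖ := opNorm_nonneg _
    have n4 : (0:ℝ) ≤ ‖i1‖ := opNorm_nonneg _
    nlinarith
  refine ⟨φ, ψ, hφ, hψ, fun v hv => ?_⟩
  show W.subtypeL (i2 (restrCLM hW (extCLM hW (i1 (W.orthogonalProjectionOnto v))))) = v
  rw [restr_ext]
  simp only [i1, i2, LinearIsometry.coe_toContinuousLinearMap,
    LinearIsometryEquiv.coe_toLinearIsometry, LinearIsometryEquiv.symm_apply_apply,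
    Submodule.subtypeL_apply]
  exact W.starProjection_eq_self_iff.2 hv


noncomputable section

def ap1 {q p m n : ℕ} (φ : Euc q →L[ℝ] Euc p) (T : Fin q → Fin m → Fin n → ℝ) :
    Fin p → Fin m → Fin n → ℝ :=
  fun i j k => φ (WithLp.toLp 2 (fun a => T a j k) : Euc q) i

def ap2 {m q p n : ℕ} (φ : Euc q →L[ℝ] Euc p) (T : Fin m → Fin q → Fin n → ℝ) :
    Fin m → Fin p → Fin n → ℝ :=
  fun i j k => φ (WithLp.toLp 2 (fun b => T i b k) : Euc q) j

def ap3 {m n q p : ℕ} (φ : Euc q →L[ℝ] Euc p) (T : Fin m → Fin n → Fin q → ℝ) :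
    Fin m → Fin n → Fin p → ℝ :=
  fun i j k => φ (WithLp.toLp 2 (fun c => T i j c) : Euc q) k

lemma ap1_apply_sum {q p m n : ℕ} (φ : Euc q →L[ℝ] Euc p) (T : Fin q → Fin m → Fin n → ℝ)
    (i j k) : ap1 φ T i j k = ∑ a, T a j k * φ (EuclideanSpace.single a 1) i :=
  clm_apply_eq φ _ i

lemma ap2_apply_sum {m q p n : ℕ} (φ : Euc q →L[ℝ] Euc p) (T : Fin m → Fin q → Fin n → ℝ)
    (i j k) : ap2 φ T i j k = ∑ b, T i b k * φ (EuclideanSpace.single b 1) j :=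
  clm_apply_eq φ _ j

lemma ap3_apply_sum {m n q p : ℕ} (φ : Euc q →L[ℝ] Euc p) (T : Fin m → Fin n → Fin q → ℝ)
    (i j k) : ap3 φ T i j k = ∑ c, T i j c * φ (EuclideanSpace.single c 1) k :=
  clm_apply_eq φ _ k

lemma ap13_comm {q p m q' p' : ℕ} (φ : Euc q →L[ℝ] Euc p) (χ : Euc q' →L[ℝ] Euc p')
    (T : Fin q → Fin m → Fin q' → ℝ) : ap3 χ (ap1 φ T) = ap1 φ (ap3 χ T) := by
  funext i j k
  simp only [ap3_apply_sum, ap1_apply_sum, Finset.sum_mul, Finset.mul_sum]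
  rw [Finset.sum_comm]
  exact Finset.sum_congr rfl fun a _ => Finset.sum_congr rfl fun c _ => by ring

lemma ap23_comm {m q p q' p' : ℕ} (φ : Euc q →L[ℝ] Euc p) (χ : Euc q' →L[ℝ] Euc p')
    (T : Fin m → Fin q → Fin q' → ℝ) : ap3 χ (ap2 φ T) = ap2 φ (ap3 χ T) := by
  funext i j k
  simp only [ap3_apply_sum, ap2_apply_sum, Finset.sum_mul, Finset.mul_sum]
  rw [Finset.sum_comm]
  exact Finset.sum_congr rfl fun a _ => Finset.sum_congr rfl fun c _ => by ring

lemma ap12_comm {q p m q' p' : ℕ} (φ : Euc q →L[ℝ] Euc p) (χ : Euc q' →L[ℝ] Euc p')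
    (T : Fin q → Fin q' → Fin m → ℝ) : ap2 χ (ap1 φ T) = ap1 φ (ap2 χ T) := by
  funext i j k
  simp only [ap2_apply_sum, ap1_apply_sum, Finset.sum_mul, Finset.mul_sum]
  rw [Finset.sum_comm]
  exact Finset.sum_congr rfl fun a _ => Finset.sum_congr rfl fun c _ => by ring

lemma ap1_fix {p r m n : ℕ} (φ : Euc r →L[ℝ] Euc p) (ψ : Euc p →L[ℝ] Euc r)
    (W : Submodule ℝ (Euc p)) (hfix : ∀ v ∈ W, φ (ψ v) = v)
    (A : Fin p → Fin m → Fin n → ℝ) (hA : ∀ j k, (WithLp.toLp 2 (fun i => A i j k) : Euc p) ∈ W) :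
    ap1 φ (ap1 ψ A) = A := by
  funext i j k
  show φ (ψ (WithLp.toLp 2 (fun i' => A i' j k) : Euc p)) i = A i j k
  rw [hfix _ (hA j k)]

lemma ap2_fix {p r m n : ℕ} (φ : Euc r →L[ℝ] Euc p) (ψ : Euc p →L[ℝ] Euc r)
    (W : Submodule ℝ (Euc p)) (hfix : ∀ v ∈ W, φ (ψ v) = v)
    (A : Fin m → Fin p → Fin n → ℝ) (hA : ∀ i k, (WithLp.toLp 2 (fun j => A i j k) : Euc p) ∈ W) :
    ap2 φ (ap2 ψ A) = A := by
  funext i j k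
  show φ (ψ (WithLp.toLp 2 (fun j' => A i j' k) : Euc p)) j = A i j k
  rw [hfix _ (hA i k)]

lemma ap3_fix {p r m n : ℕ} (φ : Euc r →L[ℝ] Euc p) (ψ : Euc p →L[ℝ] Euc r)
    (W : Submodule ℝ (Euc p)) (hfix : ∀ v ∈ W, φ (ψ v) = v)
    (A : Fin m → Fin n → Fin p → ℝ) (hA : ∀ i j, (WithLp.toLp 2 (fun k => A i j k) : Euc p) ∈ W) :
    ap3 φ (ap3 ψ A) = A := by
  funext i j k
  show φ (ψ (WithLp.toLp 2 (fun k' => A i j k') : Euc p)) k = A i j k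
  rw [hfix _ (hA i j)]

lemma tfrob_ap_aux {c S1 S2 : ℝ} (hc : 0 ≤ c) (h : S1 ≤ c ^ 2 * S2) :
    Real.sqrt S1 ≤ c * Real.sqrt S2 := by
  calc Real.sqrt S1 ≤ Real.sqrt (c ^ 2 * S2) := Real.sqrt_le_sqrt h
    _ = c * Real.sqrt S2 := by rw [Real.sqrt_mul (sq_nonneg c), Real.sqrt_sq hc]

lemma ap1_tfrob_le {q p m n : ℕ} (φ : Euc q →L[ℝ] Euc p) (T : Fin q → Fin m → Fin n → ℝ) :
    tfrob (ap1 φ T) ≤ ‖φ‖ * tfrob T := by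
  refine tfrob_ap_aux (norm_nonneg φ) ?_
  calc ∑ i, ∑ j, ∑ k, (ap1 φ T i j k) ^ 2
      = ∑ j, ∑ k, ∑ i, (ap1 φ T i j k) ^ 2 :=
        (Finset.sum_comm).trans (Finset.sum_congr rfl fun j _ => Finset.sum_comm)
    _ ≤ ∑ j, ∑ k, ‖φ‖ ^ 2 * ∑ a, (T a j k) ^ 2 :=
        Finset.sum_le_sum fun j _ => Finset.sum_le_sum fun k _ => sum_sq_apply_le φ _
    _ = ‖φ‖ ^ 2 * ∑ a, ∑ j, ∑ k, (T a j k) ^ 2 := by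
        simp only [← Finset.mul_sum]
        congr 1
        exact (Finset.sum_congr rfl fun j _ => Finset.sum_comm).trans Finset.sum_comm

lemma ap2_tfrob_le {m q p n : ℕ} (φ : Euc q →L[ℝ] Euc p) (T : Fin m → Fin q → Fin n → ℝ) :
    tfrob (ap2 φ T) ≤ ‖φ‖ * tfrob T := by
  refine tfrob_ap_aux (norm_nonneg φ) ?_
  calc ∑ i, ∑ j, ∑ k, (ap2 φ T i j k) ^ 2
      = ∑ i, ∑ k, ∑ j, (ap2 φ T i j k) ^ 2 :=
        Finset.sum_congr rfl fun i _ => Finset.sum_comm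
    _ ≤ ∑ i, ∑ k, ‖φ‖ ^ 2 * ∑ b, (T i b k) ^ 2 :=
        Finset.sum_le_sum fun i _ => Finset.sum_le_sum fun k _ => sum_sq_apply_le φ _
    _ = ‖φ‖ ^ 2 * ∑ i, ∑ b, ∑ k, (T i b k) ^ 2 := by
        simp only [← Finset.mul_sum]
        congr 1
        exact Finset.sum_congr rfl fun i _ => Finset.sum_comm

lemma ap3_tfrob_le {m n q p : ℕ} (φ : Euc q →L[ℝ] Euc p) (T : Fin m → Fin n → Fin q → ℝ) :
    tfrob (ap3 φ T) ≤ ‖φ‖ * tfrob T := by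
  refine tfrob_ap_aux (norm_nonneg φ) ?_
  calc ∑ i, ∑ j, ∑ k, (ap3 φ T i j k) ^ 2
      ≤ ∑ i, ∑ j, ‖φ‖ ^ 2 * ∑ c, (T i j c) ^ 2 :=
        Finset.sum_le_sum fun i _ => Finset.sum_le_sum fun j _ => sum_sq_apply_le φ _
    _ = ‖φ‖ ^ 2 * ∑ i, ∑ j, ∑ c, (T i j c) ^ 2 := by
        simp only [← Finset.mul_sum]

def toE {p1 p2 p3 : ℕ} (T : Fin p1 → Fin p2 → Fin p3 → ℝ) :
    EuclideanSpace ℝ (Fin p1 × Fin p2 × Fin p3) :=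
  WithLp.toLp 2 (fun x => T x.1 x.2.1 x.2.2)

lemma tfrob_eq_norm {p1 p2 p3 : ℕ} (T : Fin p1 → Fin p2 → Fin p3 → ℝ) :
    tfrob T = ‖toE T‖ := by
  rw [EuclideanSpace.norm_eq, tfrob]
  congr 1
  rw [Fintype.sum_prod_type]
  refine Finset.sum_congr rfl fun i _ => ?_
  rw [Fintype.sum_prod_type]
  refine Finset.sum_congr rfl fun j _ => Finset.sum_congr rfl fun k _ => ?_
  rw [Real.norm_eq_abs, sq_abs]
  rfl

lemma toE_sub {p1 p2 p3 : ℕ} (T T' : Fin p1 → Fin p2 → Fin p3 → ℝ) :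
    toE (fun i j k => T i j k - T' i j k) = toE T - toE T' := rfl

lemma tfrob_nonneg {p1 p2 p3 : ℕ} (T : Fin p1 → Fin p2 → Fin p3 → ℝ) : 0 ≤ tfrob T :=
  Real.sqrt_nonneg _

lemma ap1_sub_left {q p m n : ℕ} (φ φ' : Euc q →L[ℝ] Euc p) (T : Fin q → Fin m → Fin n → ℝ) :
    ap1 (φ - φ') T = fun i j k => ap1 φ T i j k - ap1 φ' T i j k := by
  funext i j k
  show (φ - φ') _ i = _
  rw [ContinuousLinearMap.sub_apply]
  rfl

lemma ap2_sub_left {m q p n : ℕ} (φ φ' : Euc q →L[ℝ] Euc p) (T : Fin m → Fin q → Fin n → ℝ) :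
    ap2 (φ - φ') T = fun i j k => ap2 φ T i j k - ap2 φ' T i j k := by
  funext i j k
  show (φ - φ') _ j = _
  rw [ContinuousLinearMap.sub_apply]
  rfl

lemma ap3_sub_left {m n q p : ℕ} (φ φ' : Euc q →L[ℝ] Euc p) (T : Fin m → Fin n → Fin q → ℝ) :
    ap3 (φ - φ') T = fun i j k => ap3 φ T i j k - ap3 φ' T i j k := by
  funext i j k
  show (φ - φ') _ k = _
  rw [ContinuousLinearMap.sub_apply]
  rfl

lemma ap1_sub_right {q p m n : ℕ} (φ : Euc q →L[ℝ] Euc p) (T T' : Fin q → Fin m → Fin n → ℝ) :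
    ap1 φ (fun a j k => T a j k - T' a j k) = fun i j k => ap1 φ T i j k - ap1 φ T' i j k := by
  funext i j k
  show φ ((WithLp.toLp 2 (fun a => T a j k) : Euc q) - (WithLp.toLp 2 (fun a => T' a j k) : Euc q)) i = _
  rw [map_sub]
  rfl

lemma ap2_sub_right {m q p n : ℕ} (φ : Euc q →L[ℝ] Euc p) (T T' : Fin m → Fin q → Fin n → ℝ) :
    ap2 φ (fun i b k => T i b k - T' i b k) = fun i j k => ap2 φ T i j k - ap2 φ T' i j k := by
  funext i j k
  show φ ((WithLp.toLp 2 (fun b => T i b k) : Euc q) - (WithLp.toLp 2 (fun b => T' i b k) : Euc q)) j = _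
  rw [map_sub]
  rfl

lemma ap3_sub_right {m n q p : ℕ} (φ : Euc q →L[ℝ] Euc p) (T T' : Fin m → Fin n → Fin q → ℝ) :
    ap3 φ (fun i j c => T i j c - T' i j c) = fun i j k => ap3 φ T i j k - ap3 φ T' i j k := by
  funext i j k
  show φ ((WithLp.toLp 2 (fun c => T i j c) : Euc q) - (WithLp.toLp 2 (fun c => T' i j c) : Euc q)) k = _
  rw [map_sub]
  rfl

lemma finrank_clm (r p : ℕ) : Module.finrank ℝ (Euc r →L[ℝ] Euc p) = p * r := by
  rw [← (LinearMap.toContinuousLinearMap :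
      (Euc r →ₗ[ℝ] Euc p) ≃ₗ[ℝ] (Euc r →L[ℝ] Euc p)).finrank_eq,
    Module.finrank_linearMap, finrank_euclideanSpace_fin, finrank_euclideanSpace_fin, mul_comm]

end

set_option maxHeartbeats 1000000 in
/-- ε-net for the class of unit-Frobenius-norm tensors of multilinear rank at most
`(r₁,r₂,r₃)`: there is a set of at most `((8+ε)/ε)^(r₁r₂r₃ + p₁r₁ + p₂r₂ + p₃r₃)` tensors
of Frobenius norm at most 1 such that every `A` with `rank(Mᵢ(A)) ≤ rᵢ` and `‖A‖_F ≤ 1`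
is within Frobenius distance `ε` of the net. -/
theorem stmt15 (p1 p2 p3 r1 r2 r3 : ℕ) (ε : ℝ) (hε0 : 0 < ε) (hε1 : ε < 1) :
    ∃ N : Finset (Fin p1 → Fin p2 → Fin p3 → ℝ),
      (N.card : ℝ) ≤ ((8 + ε) / ε) ^ (r1 * r2 * r3 + p1 * r1 + p2 * r2 + p3 * r3) ∧
      (∀ A' ∈ N, tfrob A' ≤ 1) ∧
      ∀ A : Fin p1 → Fin p2 → Fin p3 → ℝ,
        (Matrix.of fun i (jk : Fin p2 × Fin p3) => A i jk.1 jk.2).rank ≤ r1 →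
        (Matrix.of fun j (ik : Fin p1 × Fin p3) => A ik.1 j ik.2).rank ≤ r2 →
        (Matrix.of fun k (ij : Fin p1 × Fin p2) => A ij.1 ij.2 k).rank ≤ r3 →
        tfrob A ≤ 1 →
        ∃ A' ∈ N, tfrob (fun i j k => A i j k - A' i j k) ≤ ε := by
  classical
  set δ := ε / 4 with hδdef
  have hδ : 0 < δ := by positivity
  have hbase : ((2 + δ) / δ : ℝ) = (8 + ε) / ε := by
    rw [hδdef]
    field_simp
    ring
  have hbnn : (0:ℝ) ≤ (8 + ε) / ε := div_nonneg (by linarith) hε0.le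
  obtain ⟨N1, hN1card, hN1ball, hN1net⟩ := net_of_ball (Euc r1 →L[ℝ] Euc p1) hδ
  obtain ⟨N2, hN2card, hN2ball, hN2net⟩ := net_of_ball (Euc r2 →L[ℝ] Euc p2) hδ
  obtain ⟨N3, hN3card, hN3ball, hN3net⟩ := net_of_ball (Euc r3 →L[ℝ] Euc p3) hδ
  obtain ⟨N4, hN4card, hN4ball, hN4net⟩ :=
    net_of_ball (EuclideanSpace ℝ (Fin r1 × Fin r2 × Fin r3)) hδ
  have e1 : (N1.card : ℝ) ≤ ((8 + ε) / ε) ^ (p1 * r1) := by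
    rw [← hbase, ← finrank_clm r1 p1]; exact hN1card
  have e2 : (N2.card : ℝ) ≤ ((8 + ε) / ε) ^ (p2 * r2) := by
    rw [← hbase, ← finrank_clm r2 p2]; exact hN2card
  have e3' : (N3.card : ℝ) ≤ ((8 + ε) / ε) ^ (p3 * r3) := by
    rw [← hbase, ← finrank_clm r3 p3]; exact hN3card
  have e4 : (N4.card : ℝ) ≤ ((8 + ε) / ε) ^ (r1 * r2 * r3) := by
    rw [← hbase]
    have : Module.finrank ℝ (EuclideanSpace ℝ (Fin r1 × Fin r2 × Fin r3)) = r1 * r2 * r3 := by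
      rw [finrank_euclideanSpace]
      simp [Fintype.card_prod, mul_assoc]
    rw [← this]; exact hN4card
  let G : ((Euc r1 →L[ℝ] Euc p1) × (Euc r2 →L[ℝ] Euc p2) × (Euc r3 →L[ℝ] Euc p3) ×
      EuclideanSpace ℝ (Fin r1 × Fin r2 × Fin r3)) → (Fin p1 → Fin p2 → Fin p3 → ℝ) :=
    fun q => ap1 q.1 (ap2 q.2.1 (ap3 q.2.2.1 (fun a b c => q.2.2.2 (a, b, c))))
  refine ⟨(N1 ×ˢ N2 ×ˢ N3 ×ˢ N4).image G, ?_, ?_, ?_⟩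
  · calc (((N1 ×ˢ N2 ×ˢ N3 ×ˢ N4).image G).card : ℝ)
        ≤ ((N1 ×ˢ N2 ×ˢ N3 ×ˢ N4).card : ℝ) := by exact_mod_cast Finset.card_image_le
      _ = (N1.card : ℝ) * ((N2.card : ℝ) * ((N3.card : ℝ) * (N4.card : ℝ))) := by
          push_cast [Finset.card_product]; ring
      _ ≤ ((8 + ε) / ε) ^ (p1 * r1) * (((8 + ε) / ε) ^ (p2 * r2) *
            (((8 + ε) / ε) ^ (p3 * r3) * ((8 + ε) / ε) ^ (r1 * r2 * r3))) := by
          refine mul_le_mul e1 ?_ (by positivity) (pow_nonneg hbnn _)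
          refine mul_le_mul e2 ?_ (by positivity) (pow_nonneg hbnn _)
          exact mul_le_mul e3' e4 (Nat.cast_nonneg _) (pow_nonneg hbnn _)
      _ = ((8 + ε) / ε) ^ (r1 * r2 * r3 + p1 * r1 + p2 * r2 + p3 * r3) := by
          rw [← pow_add, ← pow_add, ← pow_add]; congr 1; ring
  · intro A' hA'
    obtain ⟨q, hq, rfl⟩ := Finset.mem_image.1 hA'
    have hmem : q.1 ∈ N1 ∧ q.2.1 ∈ N2 ∧ q.2.2.1 ∈ N3 ∧ q.2.2.2 ∈ N4 := by
      rcases q with ⟨a, b, c, d⟩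
      simpa [Finset.mem_product] using hq
    have hb4 : tfrob (fun a b c => q.2.2.2 (a, b, c)) = ‖q.2.2.2‖ := by
      rw [tfrob_eq_norm]; rfl
    have t3 := ap3_tfrob_le q.2.2.1 (fun a b c => q.2.2.2 (a, b, c))
    have t2 := ap2_tfrob_le q.2.1 (ap3 q.2.2.1 (fun a b c => q.2.2.2 (a, b, c)))
    have t1 := ap1_tfrob_le q.1 (ap2 q.2.1 (ap3 q.2.2.1 (fun a b c => q.2.2.2 (a, b, c))))
    have hGq : G q = ap1 q.1 (ap2 q.2.1 (ap3 q.2.2.1 (fun a b c => q.2.2.2 (a, b, c)))) := rfl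
    rw [hGq]
    have n1 := hN1ball q.1 hmem.1
    have n2 := hN2ball q.2.1 hmem.2.1
    have n3 := hN3ball q.2.2.1 hmem.2.2.1
    have n4 := hN4ball q.2.2.2 hmem.2.2.2
    rw [hb4] at t3
    nlinarith [norm_nonneg q.1, norm_nonneg q.2.1, norm_nonneg q.2.2.1, norm_nonneg q.2.2.2,
      tfrob_nonneg (ap3 q.2.2.1 (fun a b c => q.2.2.2 (a, b, c))),
      tfrob_nonneg (ap2 q.2.1 (ap3 q.2.2.1 (fun a b c => q.2.2.2 (a, b, c))))]
  · intro A h1 h2 h3 hA1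
    -- mode subspaces
    let L1 := (WithLp.linearEquiv 2 ℝ (Fin p1 → ℝ)).symm
    let W1 : Submodule ℝ (Euc p1) :=
      (Submodule.span ℝ (Set.range (Matrix.of fun i (jk : Fin p2 × Fin p3) => A i jk.1 jk.2)ᵀ)).map
        (L1 : (Fin p1 → ℝ) →ₗ[ℝ] Euc p1)
    have hW1 : Module.finrank ℝ W1 ≤ r1 := by
      rw [show Module.finrank ℝ W1 =
          (Matrix.of fun i (jk : Fin p2 × Fin p3) => A i jk.1 jk.2).rank from
        (LinearEquiv.finrank_map_eq L1 _).trans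
          (Matrix.rank_eq_finrank_span_cols _).symm]
      exact h1
    have hcol1 : ∀ j k, (WithLp.toLp 2 (fun i => A i j k) : Euc p1) ∈ W1 := fun j k =>
      Submodule.mem_map.2 ⟨fun i => A i j k, Submodule.subset_span ⟨(j, k), rfl⟩, rfl⟩
    obtain ⟨φ1, ψ1, hφ1, hψ1, hfix1⟩ := exists_iso W1 hW1
    let L2 := (WithLp.linearEquiv 2 ℝ (Fin p2 → ℝ)).symm
    let W2 : Submodule ℝ (Euc p2) :=
      (Submodule.span ℝ (Set.range (Matrix.of fun j (ik : Fin p1 × Fin p3) => A ik.1 j ik.2)ᵀ)).map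
        (L2 : (Fin p2 → ℝ) →ₗ[ℝ] Euc p2)
    have hW2 : Module.finrank ℝ W2 ≤ r2 := by
      rw [show Module.finrank ℝ W2 =
          (Matrix.of fun j (ik : Fin p1 × Fin p3) => A ik.1 j ik.2).rank from
        (LinearEquiv.finrank_map_eq L2 _).trans
          (Matrix.rank_eq_finrank_span_cols _).symm]
      exact h2
    have hcol2 : ∀ i k, (WithLp.toLp 2 (fun j => A i j k) : Euc p2) ∈ W2 := fun i k =>
      Submodule.mem_map.2 ⟨fun j => A i j k, Submodule.subset_span ⟨(i, k), rfl⟩, rfl⟩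
    obtain ⟨φ2, ψ2, hφ2, hψ2, hfix2⟩ := exists_iso W2 hW2
    let L3 := (WithLp.linearEquiv 2 ℝ (Fin p3 → ℝ)).symm
    let W3 : Submodule ℝ (Euc p3) :=
      (Submodule.span ℝ (Set.range (Matrix.of fun k (ij : Fin p1 × Fin p2) => A ij.1 ij.2 k)ᵀ)).map
        (L3 : (Fin p3 → ℝ) →ₗ[ℝ] Euc p3)
    have hW3 : Module.finrank ℝ W3 ≤ r3 := by
      rw [show Module.finrank ℝ W3 =
          (Matrix.of fun k (ij : Fin p1 × Fin p2) => A ij.1 ij.2 k).rank from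
        (LinearEquiv.finrank_map_eq L3 _).trans
          (Matrix.rank_eq_finrank_span_cols _).symm]
      exact h3
    have hcol3 : ∀ i j, (WithLp.toLp 2 (fun k => A i j k) : Euc p3) ∈ W3 := fun i j =>
      Submodule.mem_map.2 ⟨fun k => A i j k, Submodule.subset_span ⟨(i, j), rfl⟩, rfl⟩
    obtain ⟨φ3, ψ3, hφ3, hψ3, hfix3⟩ := exists_iso W3 hW3
    -- core tensor
    set B := ap1 ψ1 (ap2 ψ2 (ap3 ψ3 A)) with hBdef
    have t3 := ap3_tfrob_le ψ3 A
    have t2 := ap2_tfrob_le ψ2 (ap3 ψ3 A)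
    have t1 := ap1_tfrob_le ψ1 (ap2 ψ2 (ap3 ψ3 A))
    have tB3 : tfrob (ap3 ψ3 A) ≤ 1 := by
      nlinarith [tfrob_nonneg A, norm_nonneg ψ3]
    have tB2 : tfrob (ap2 ψ2 (ap3 ψ3 A)) ≤ 1 := by
      nlinarith [tfrob_nonneg (ap3 ψ3 A), norm_nonneg ψ2]
    have tB : tfrob B ≤ 1 := by
      rw [hBdef]
      nlinarith [tfrob_nonneg (ap2 ψ2 (ap3 ψ3 A)), norm_nonneg ψ1]
    -- reconstruction
    have hr3 : ap3 φ3 B = ap1 ψ1 (ap2 ψ2 A) := by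
      rw [hBdef, ap13_comm, ap23_comm, ap3_fix φ3 ψ3 W3 hfix3 A hcol3]
    have hr2 : ap2 φ2 (ap1 ψ1 (ap2 ψ2 A)) = ap1 ψ1 A := by
      rw [ap12_comm, ap2_fix φ2 ψ2 W2 hfix2 A hcol2]
    have hrecon : ap1 φ1 (ap2 φ2 (ap3 φ3 B)) = A := by
      rw [hr3, hr2, ap1_fix φ1 ψ1 W1 hfix1 A hcol1]
    -- pick net points
    obtain ⟨u1, hu1N, hu1⟩ := hN1net φ1 hφ1
    obtain ⟨u2, hu2N, hu2⟩ := hN2net φ2 hφ2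
    obtain ⟨u3, hu3N, hu3⟩ := hN3net φ3 hφ3
    have htB : ‖toE B‖ ≤ 1 := by rw [← tfrob_eq_norm]; exact tB
    obtain ⟨t', ht'N, ht'⟩ := hN4net (toE B) htB
    have hn1 : ‖u1‖ ≤ 1 := hN1ball u1 hu1N
    have hn2 : ‖u2‖ ≤ 1 := hN2ball u2 hu2N
    have hn3 : ‖u3‖ ≤ 1 := hN3ball u3 hu3N
    -- abbreviations
    set Bt : Fin r1 → Fin r2 → Fin r3 → ℝ := fun a b c => t' (a, b, c) with hBt
    set P1 := ap3 φ3 B with hP1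
    set P0 := ap2 φ2 P1 with hP0
    have tP1 : tfrob P1 ≤ 1 := by
      rw [hP1]
      have := ap3_tfrob_le φ3 B
      nlinarith [tfrob_nonneg B, norm_nonneg φ3]
    have tP0 : tfrob P0 ≤ 1 := by
      rw [hP0]
      have := ap2_tfrob_le φ2 P1
      nlinarith [tfrob_nonneg P1, norm_nonneg φ2]
    refine ⟨ap1 u1 (ap2 u2 (ap3 u3 Bt)), Finset.mem_image.2 ⟨(u1, u2, u3, t'), by
      simp only [Finset.mem_product]; exact ⟨hu1N, hu2N, hu3N, ht'N⟩, rfl⟩, ?_⟩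
    -- distances
    have d1 : tfrob (fun i j k => A i j k - ap1 u1 P0 i j k) ≤ δ := by
      have heq : (fun i j k => A i j k - ap1 u1 P0 i j k) = ap1 (φ1 - u1) P0 := by
        rw [ap1_sub_left, ← hrecon]
      rw [heq]
      calc tfrob (ap1 (φ1 - u1) P0) ≤ ‖φ1 - u1‖ * tfrob P0 := ap1_tfrob_le _ _
        _ ≤ δ * 1 := mul_le_mul hu1 tP0 (tfrob_nonneg _) hδ.le
        _ = δ := mul_one δ
    have d2 : tfrob (fun i j k => ap1 u1 P0 i j k - ap1 u1 (ap2 u2 P1) i j k) ≤ δ := by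
      have heq : (fun i j k => ap1 u1 P0 i j k - ap1 u1 (ap2 u2 P1) i j k)
          = ap1 u1 (ap2 (φ2 - u2) P1) := by
        rw [ap2_sub_left, ap1_sub_right, hP0]
      rw [heq]
      have c2 : tfrob (ap2 (φ2 - u2) P1) ≤ δ := by
        refine le_trans (ap2_tfrob_le (φ2 - u2) P1) ?_
        calc ‖φ2 - u2‖ * tfrob P1 ≤ δ * 1 := mul_le_mul hu2 tP1 (tfrob_nonneg _) hδ.le
          _ = δ := mul_one δ
      refine le_trans (ap1_tfrob_le u1 _) ?_
      calc ‖u1‖ * tfrob (ap2 (φ2 - u2) P1) ≤ 1 * δ := mul_le_mul hn1 c2 (tfrob_nonneg _) zero_le_one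
        _ = δ := one_mul δ
    have d3 : tfrob (fun i j k => ap1 u1 (ap2 u2 P1) i j k
        - ap1 u1 (ap2 u2 (ap3 u3 B)) i j k) ≤ δ := by
      have heq : (fun i j k => ap1 u1 (ap2 u2 P1) i j k - ap1 u1 (ap2 u2 (ap3 u3 B)) i j k)
          = ap1 u1 (ap2 u2 (ap3 (φ3 - u3) B)) := by
        rw [ap3_sub_left, ap2_sub_right, ap1_sub_right, hP1]
      rw [heq]
      have c3 : tfrob (ap3 (φ3 - u3) B) ≤ δ := by
        refine le_trans (ap3_tfrob_le (φ3 - u3) B) ?_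
        calc ‖φ3 - u3‖ * tfrob B ≤ δ * 1 := mul_le_mul hu3 tB (tfrob_nonneg _) hδ.le
          _ = δ := mul_one δ
      have c2 : tfrob (ap2 u2 (ap3 (φ3 - u3) B)) ≤ δ := by
        refine le_trans (ap2_tfrob_le u2 _) ?_
        calc ‖u2‖ * tfrob (ap3 (φ3 - u3) B) ≤ 1 * δ :=
              mul_le_mul hn2 c3 (tfrob_nonneg _) zero_le_one
          _ = δ := one_mul δ
      refine le_trans (ap1_tfrob_le u1 _) ?_
      calc ‖u1‖ * tfrob (ap2 u2 (ap3 (φ3 - u3) B)) ≤ 1 * δ :=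
            mul_le_mul hn1 c2 (tfrob_nonneg _) zero_le_one
        _ = δ := one_mul δ
    have d4 : tfrob (fun i j k => ap1 u1 (ap2 u2 (ap3 u3 B)) i j k
        - ap1 u1 (ap2 u2 (ap3 u3 Bt)) i j k) ≤ δ := by
      have heq : (fun i j k => ap1 u1 (ap2 u2 (ap3 u3 B)) i j k
          - ap1 u1 (ap2 u2 (ap3 u3 Bt)) i j k)
          = ap1 u1 (ap2 u2 (ap3 u3 (fun a b c => B a b c - Bt a b c))) := by
        rw [ap3_sub_right, ap2_sub_right, ap1_sub_right]
      rw [heq]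
      have hin : tfrob (fun a b c => B a b c - Bt a b c) ≤ δ := by
        rw [tfrob_eq_norm, toE_sub]
        have : toE Bt = t' := rfl
        rw [this]
        exact ht'
      have c3 : tfrob (ap3 u3 (fun a b c => B a b c - Bt a b c)) ≤ δ := by
        refine le_trans (ap3_tfrob_le u3 _) ?_
        calc ‖u3‖ * tfrob (fun a b c => B a b c - Bt a b c) ≤ 1 * δ :=
              mul_le_mul hn3 hin (tfrob_nonneg _) zero_le_one
          _ = δ := one_mul δ
      have c2 : tfrob (ap2 u2 (ap3 u3 (fun a b c => B a b c - Bt a b c))) ≤ δ := by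
        refine le_trans (ap2_tfrob_le u2 _) ?_
        calc ‖u2‖ * tfrob (ap3 u3 (fun a b c => B a b c - Bt a b c)) ≤ 1 * δ :=
              mul_le_mul hn2 c3 (tfrob_nonneg _) zero_le_one
          _ = δ := one_mul δ
      refine le_trans (ap1_tfrob_le u1 _) ?_
      calc ‖u1‖ * tfrob (ap2 u2 (ap3 u3 (fun a b c => B a b c - Bt a b c))) ≤ 1 * δ :=
            mul_le_mul hn1 c2 (tfrob_nonneg _) zero_le_one
        _ = δ := one_mul δ
    -- triangle inequality
    have key : tfrob (fun i j k => A i j k - ap1 u1 (ap2 u2 (ap3 u3 Bt)) i j k)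
        ≤ δ + δ + δ + δ := by
      rw [tfrob_eq_norm, toE_sub]
      rw [tfrob_eq_norm, toE_sub] at d1 d2 d3 d4
      calc ‖toE A - toE (ap1 u1 (ap2 u2 (ap3 u3 Bt)))‖
          = ‖(toE A - toE (ap1 u1 P0)) + ((toE (ap1 u1 P0) - toE (ap1 u1 (ap2 u2 P1)))
            + ((toE (ap1 u1 (ap2 u2 P1)) - toE (ap1 u1 (ap2 u2 (ap3 u3 B))))
            + (toE (ap1 u1 (ap2 u2 (ap3 u3 B))) - toE (ap1 u1 (ap2 u2 (ap3 u3 Bt))))))‖ := by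
            congr 1; abel
        _ ≤ δ + δ + δ + δ := by
            refine le_trans (norm_add_le _ _) ?_
            refine le_trans (add_le_add d1 (norm_add_le _ _)) ?_
            refine le_trans (add_le_add_right (add_le_add d2 (norm_add_le _ _)) _) ?_
            refine le_trans (add_le_add_right (add_le_add_right (add_le_add d3 d4) _) _) ?_
            linarith
    calc tfrob (fun i j k => A i j k - ap1 u1 (ap2 u2 (ap3 u3 Bt)) i j k)
        ≤ δ + δ + δ + δ := key
      _ = ε := by rw [hδdef]; ring
end
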